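/- arXiv:1908.10886 — 6 statements merged into one kernel-verified Lean document; each statement's English description precedes it below -/
import Mathlib

section
/- If ω : ℝ^d → [0,∞) is measurable, locally bounded, and satisfies the subadditivity-type condition (α): there exist L, C > 0 with ω(x+y) ≤ L(ω(x) + ω(y)) + log C for all x, y ∈ ℝ^d, then ω has at most polynomial growth, i.e. there exist q, M > 0 such that ω(x) ≤ M(1 + |x|)^q for all x ∈ ℝ^d. -/
open Real

/-- A weight function (non-negative, measurable, locally bounded) on ℝ^d
satisfying condition (α) has at most polynomial growth. -/
theorem weight_polynomial_growth (d : ℕ)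
    (ω : EuclideanSpace ℝ (Fin d) → ℝ)
    (hnn : ∀ x, 0 ≤ ω x)
    (hmeas : Measurable ω)
    (hloc : ∀ r : ℝ, ∃ M : ℝ, ∀ x, ‖x‖ ≤ r → ω x ≤ M)
    (L C : ℝ) (hL : 0 < L) (hC : 0 < C)
    (halpha : ∀ x y, ω (x + y) ≤ L * (ω x + ω y) + Real.log C) :
    ∃ q M : ℝ, 0 < q ∧ 0 < M ∧ ∀ x, ω x ≤ M * (1 + ‖x‖) ^ q := by
  obtain ⟨B, hB⟩ := hloc 1
  set c : ℝ := max (Real.log C) 0 with hc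
  have hc0 : 0 ≤ c := le_max_right _ _
  have hlogc : Real.log C ≤ c := le_max_left _ _
  set K : ℝ := 2 * max L 1 with hK
  have hK2 : 2 ≤ K := by
    have : (1:ℝ) ≤ max L 1 := le_max_right _ _
    nlinarith
  have hK1 : 1 < K := by linarith
  have hK0 : 0 < K := by linarith
  have h2L : 2 * L ≤ K := by
    have : L ≤ max L 1 := le_max_left _ _
    nlinarith
  have hB0 : 0 ≤ B := le_trans (hnn 0) (hB 0 (by simp))
  set A : ℝ := B + c with hA
  have hA0 : 0 ≤ A := by positivity
  -- main induction
  have main : ∀ n : ℕ, ∀ x : EuclideanSpace ℝ (Fin d), ‖x‖ ≤ 2 ^ n →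
      ω x + c ≤ K ^ n * A := by
    intro n
    induction n with
    | zero =>
      intro x hx
      simp only [pow_zero, one_mul]
      have := hB x (by simpa using hx)
      linarith
    | succ n ih =>
      intro x hx
      set y : EuclideanSpace ℝ (Fin d) := (2⁻¹ : ℝ) • x with hy
      have hyy : y + y = x := by
        rw [hy, ← add_smul]; norm_num
      have hyn : ‖y‖ ≤ 2 ^ n := by
        rw [hy, norm_smul]
        have : ‖(2⁻¹ : ℝ)‖ = 2⁻¹ := by norm_num
        rw [this]
        have h2 : (2:ℝ) ^ (n+1) = 2 * 2 ^ n := by ring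
        rw [h2] at hx
        linarith
      have h1 : ω x ≤ K * ω y + c := by
        calc ω x = ω (y + y) := by rw [hyy]
        _ ≤ L * (ω y + ω y) + Real.log C := halpha y y
        _ = 2 * L * ω y + Real.log C := by ring
        _ ≤ K * ω y + c := by
            have := hnn y
            nlinarith
      have h2 : ω y + c ≤ K ^ n * A := ih y hyn
      have hKc : 2 * c ≤ K * c := by nlinarith
      calc ω x + c ≤ K * ω y + 2 * c := by linarith
      _ ≤ K * ω y + K * c := by linarith
      _ = K * (ω y + c) := by ring
      _ ≤ K * (K ^ n * A) := by nlinarith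
      _ = K ^ (n+1) * A := by ring
  -- choose exponent
  set q : ℝ := Real.logb 2 K with hq
  have hq1 : 1 ≤ q := by
    have h := Real.logb_le_logb_of_le (b := 2) (by norm_num) (by norm_num : (0:ℝ) < 2) hK2
    rwa [Real.logb_self_eq_one (by norm_num : (1:ℝ) < 2)] at h
  have hq0 : 0 < q := by linarith
  refine ⟨q, K * (A + 1), hq0, by positivity, ?_⟩
  intro x
  set t : ℝ := 1 + ‖x‖ with ht
  have ht1 : 1 ≤ t := by have := norm_nonneg x; rw [ht]; linarith
  have ht0 : 0 < t := by linarith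
  set n : ℕ := ⌈Real.logb 2 t⌉₊ with hn
  have hlogt0 : 0 ≤ Real.logb 2 t := Real.logb_nonneg (by norm_num) ht1
  have htn : t ≤ 2 ^ n := by
    have h1 : Real.logb 2 t ≤ (n : ℝ) := Nat.le_ceil _
    have h2 : (2:ℝ) ^ (Real.logb 2 t) ≤ (2:ℝ) ^ ((n:ℝ)) :=
      (Real.rpow_le_rpow_left_iff (by norm_num : (1:ℝ) < 2)).mpr h1
    rw [Real.rpow_logb (by norm_num) (by norm_num) ht0] at h2
    rwa [Real.rpow_natCast] at h2
  have hxn : ‖x‖ ≤ 2 ^ n := by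
    have : ‖x‖ ≤ t := by simp [ht]
    linarith
  have hωx : ω x ≤ K ^ n * A := by
    have := main n x hxn
    linarith
  have hnle : (n : ℝ) ≤ Real.logb 2 t + 1 := by
    have := Nat.ceil_lt_add_one hlogt0
    linarith
  -- K ^ n ≤ K * t ^ q
  have hKn : (K : ℝ) ^ n ≤ K * t ^ q := by
    have h1 : (K : ℝ) ^ n = K ^ ((n : ℝ)) := (Real.rpow_natCast K n).symm
    have h2 : K ^ ((n:ℝ)) ≤ K ^ (Real.logb 2 t + 1) :=
      (Real.rpow_le_rpow_left_iff hK1).mpr hnle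
    have h3 : K ^ (Real.logb 2 t + 1) = K ^ (Real.logb 2 t) * K := by
      rw [Real.rpow_add hK0, Real.rpow_one]
    have h4 : K ^ (Real.logb 2 t) = t ^ q := by
      rw [Real.rpow_def_of_pos hK0, Real.rpow_def_of_pos ht0, hq, Real.logb, Real.logb]
      ring_nf
    rw [h1]
    calc K ^ ((n:ℝ)) ≤ K ^ (Real.logb 2 t + 1) := h2
    _ = t ^ q * K := by rw [h3, h4]
    _ = K * t ^ q := by ring
  have htq0 : 0 < t ^ q := Real.rpow_pos_of_pos ht0 q
  calc ω x ≤ K ^ n * A := hωx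
  _ ≤ (K * t ^ q) * A := by
      have hKn0 : (0:ℝ) ≤ K ^ n := by positivity
      nlinarith
  _ ≤ K * (A + 1) * t ^ q := by nlinarith
end

section
/- Let η : ℝ^d → [0,∞) be a radially increasing weight function satisfying condition (α). Then there exists λ > 0 with ∑_{j ∈ ℤ^d} e^{-λη(j)} < ∞ if and only if η satisfies condition (γ): there exist A, B > 0 such that A log(1+|x|) ≤ η(x) + log B for all x ∈ ℝ^d. -/
open Real

lemma coord_abs_le_norm {d : ℕ} (x : EuclideanSpace ℝ (Fin d)) (i : Fin d) :
    |x i| ≤ ‖x‖ := by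
  rw [EuclideanSpace.norm_eq]
  rw [← Real.sqrt_sq (abs_nonneg (x i))]
  apply Real.sqrt_le_sqrt
  rw [sq_abs]
  have := Finset.single_le_sum (f := fun j => ‖x j‖ ^ 2)
    (fun j _ => sq_nonneg _) (Finset.mem_univ i)
  simpa [Real.norm_eq_abs, sq_abs] using this

lemma summable_g_int : Summable (fun k : ℤ => (((1:ℝ) + |(k:ℝ)|) ^ 2)⁻¹) := by
  have hnat : Summable (fun n : ℕ => (((1:ℝ) + (n:ℝ)) ^ 2)⁻¹) := by
    have h0 : Summable (fun n : ℕ => 1 / (n:ℝ) ^ 2) :=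
      summable_one_div_nat_pow.mpr one_lt_two
    have := (summable_nat_add_iff 1).mpr h0
    apply this.congr
    intro n
    push_cast
    ring
  apply Summable.of_nat_of_neg
  · exact hnat.congr (by intro n; norm_num)
  · apply hnat.congr
    intro n
    push_cast
    rw [abs_neg, abs_of_nonneg (by positivity : (0:ℝ) ≤ (n:ℝ))]

lemma summable_pi_prod {g : ℤ → ℝ} (hg : Summable g) (hg0 : ∀ k, 0 ≤ g k) (d : ℕ) :
    Summable (fun j : Fin d → ℤ => ∏ i, g (j i)) := by
  induction d with
  | zero =>
    haveI : Unique (Fin 0 → ℤ) :=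
      ⟨⟨fun i => i.elim0⟩, fun f => funext fun i => i.elim0⟩
    haveI : Finite (Fin 0 → ℤ) := Finite.of_subsingleton
    exact Summable.of_finite
  | succ n ih =>
    have key : Summable (fun x : ℤ × (Fin n → ℤ) => g x.1 * ∏ i, g (x.2 i)) :=
      Summable.mul_of_nonneg (f := g) (g := fun b : Fin n → ℤ => ∏ i, g (b i)) hg ih
        (fun k => hg0 k) (fun b => Finset.prod_nonneg fun i _ => hg0 _)
    have h2 := key.comp_injective (Fin.consEquiv (fun _ => ℤ)).symm.injective
    apply h2.congr
    intro j
    simp only [Function.comp_apply, Fin.consEquiv,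
      Equiv.coe_fn_symm_mk, Fin.tail]
    rw [Fin.prod_univ_succ]

/-- For a radially increasing weight function η on ℝ^d satisfying (α),
the sum ∑_{j ∈ ℤ^d} e^{-λη(j)} is finite for some λ > 0 if and only if η satisfies
condition (γ). -/
theorem summable_iff_gamma (d : ℕ)
    (η : EuclideanSpace ℝ (Fin d) → ℝ)
    (hnn : ∀ x, 0 ≤ η x)
    (hmeas : Measurable η)
    (hloc : ∀ r : ℝ, ∃ M : ℝ, ∀ x, ‖x‖ ≤ r → η x ≤ M)
    (hrad : ∀ x y, ‖x‖ ≤ ‖y‖ → η x ≤ η y)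
    (L C : ℝ) (hL : 0 < L) (hC : 0 < C)
    (halpha : ∀ x y, η (x + y) ≤ L * (η x + η y) + Real.log C) :
    (∃ lam : ℝ, 0 < lam ∧
        Summable (fun j : Fin d → ℤ =>
          Real.exp (-lam * η (WithLp.toLp 2 (fun i => (j i : ℝ)))))) ↔
      (∃ A B : ℝ, 0 < A ∧ 0 < B ∧
        ∀ x, A * Real.log (1 + ‖x‖) ≤ η x + Real.log B) := by
  constructor
  · rintro ⟨lam, hlam, hs⟩
    rcases Nat.eq_zero_or_pos d with hd | hd
    · refine ⟨1, 1, one_pos, one_pos, fun x => ?_⟩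
      subst hd
      have hx0 : x = 0 := Subsingleton.elim x 0
      simp [hx0, hnn 0]
    · -- d ≥ 1
      have i0 : Fin d := ⟨0, hd⟩
      set f : (Fin d → ℤ) → ℝ := fun j => Real.exp (-lam * η (WithLp.toLp 2 (fun i => (j i : ℝ)))) with hf
      set S : ℝ := ∑' j, f j with hS
      have hSpos : 0 < S :=
        Summable.tsum_pos hs (fun j => (Real.exp_pos _).le) (fun _ => 0) (Real.exp_pos _)
      refine ⟨1 / lam, Real.exp ((1 / lam) * Real.log (2 * S)), by positivity,
        Real.exp_pos _, fun x => ?_⟩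
      rw [Real.log_exp]
      set R := ‖x‖ with hR
      have hR0 : 0 ≤ R := norm_nonneg x
      set n := ⌊R⌋₊ with hn
      -- the finite set of lattice points
      set T : Finset (Fin d → ℤ) :=
        (Finset.Icc (0 : ℤ) (n : ℤ)).image (fun k => Pi.single i0 k) with hT
      have hcardIcc : (Finset.Icc (0 : ℤ) (n : ℤ)).card = n + 1 := by
        rw [Int.card_Icc]
        simp
      have hcard : T.card = n + 1 := by
        rw [hT, Finset.card_image_of_injective _ (Pi.single_injective i0), hcardIcc]
      have hbound : ∀ j ∈ T, Real.exp (-lam * η x) ≤ f j := by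
        intro j hj
        rw [hT, Finset.mem_image] at hj
        obtain ⟨k, hk, rfl⟩ := hj
        rw [Finset.mem_Icc] at hk
        have hcoe : WithLp.toLp 2 (fun i => ((Pi.single i0 k : Fin d → ℤ) i : ℝ)) =
            (EuclideanSpace.single i0 (k : ℝ) : EuclideanSpace ℝ (Fin d)) := by
          ext i
          simp only [PiLp.toLp_apply, EuclideanSpace.single_apply, Pi.single_apply]
          split <;> simp_all
        have hnorm : ‖(EuclideanSpace.single i0 (k : ℝ) :
            EuclideanSpace ℝ (Fin d))‖ ≤ ‖x‖ := by
          rw [EuclideanSpace.norm_single, Real.norm_eq_abs]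
          have : |(k : ℝ)| ≤ (n : ℝ) := by
            rw [abs_of_nonneg (by exact_mod_cast hk.1)]
            exact_mod_cast hk.2
          exact this.trans (Nat.floor_le hR0)
        have hη : η (WithLp.toLp 2 (fun i => ((Pi.single i0 k : Fin d → ℤ) i : ℝ))) ≤ η x := by
          have h9 := hrad (EuclideanSpace.single i0 (k : ℝ)) x hnorm
          rwa [← hcoe] at h9
        rw [hf]
        exact Real.exp_le_exp.mpr (by nlinarith)
      have hsum1 : (T.card : ℝ) * Real.exp (-lam * η x) ≤ ∑ j ∈ T, f j := by
        have := Finset.card_nsmul_le_sum T f (Real.exp (-lam * η x)) hbound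
        simpa [nsmul_eq_mul] using this
      have hsum2 : ∑ j ∈ T, f j ≤ S :=
        Summable.sum_le_tsum T (fun j _ => (Real.exp_pos _).le) hs
      have hkey : (1 + R) ≤ 2 * S * Real.exp (lam * η x) := by
        have hRn : R < n + 1 := Nat.lt_floor_add_one R
        have h1 : (1 + R) / 2 ≤ (n + 1 : ℝ) := by linarith
        have h2 : ((n : ℝ) + 1) * Real.exp (-lam * η x) ≤ S := by
          calc ((n : ℝ) + 1) * Real.exp (-lam * η x)
              = (T.card : ℝ) * Real.exp (-lam * η x) := by rw [hcard]; push_cast; ring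
            _ ≤ ∑ j ∈ T, f j := hsum1
            _ ≤ S := hsum2
        have hepos : (0:ℝ) < Real.exp (-lam * η x) := Real.exp_pos _
        have h3 : (1 + R) / 2 * Real.exp (-lam * η x) ≤ S :=
          le_trans (by nlinarith) h2
        have h4 : Real.exp (-lam * η x) = (Real.exp (lam * η x))⁻¹ := by
          rw [← Real.exp_neg]; ring_nf
        rw [h4] at h3
        have hep : (0:ℝ) < Real.exp (lam * η x) := Real.exp_pos _
        have h7 : (1 + R) / 2 ≤ S * Real.exp (lam * η x) := by
          have h8 := mul_le_mul_of_nonneg_right h3 hep.le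
          rwa [mul_assoc, inv_mul_cancel₀ hep.ne', mul_one] at h8
        linarith
      have hlog : Real.log (1 + R) ≤ Real.log (2 * S) + lam * η x := by
        have h1 : Real.log (1 + R) ≤ Real.log (2 * S * Real.exp (lam * η x)) :=
          Real.log_le_log (by linarith) hkey
        rwa [Real.log_mul (by positivity) (Real.exp_ne_zero _), Real.log_exp] at h1
      have h5 : 1 / lam * Real.log (1 + R) ≤
          1 / lam * (Real.log (2 * S) + lam * η x) :=
        mul_le_mul_of_nonneg_left hlog (by positivity)
      have h6 : 1 / lam * (Real.log (2 * S) + lam * η x)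
          = η x + 1 / lam * Real.log (2 * S) := by
        field_simp
        ring
      linarith
  · rintro ⟨A, B, hA, hB, hAB⟩
    set lam : ℝ := (2 * (d : ℝ) + 2) / A with hlam
    have hlampos : 0 < lam := by positivity
    refine ⟨lam, hlampos, ?_⟩
    set g : ℤ → ℝ := fun k => (((1:ℝ) + |(k:ℝ)|) ^ 2)⁻¹ with hg
    have hg0 : ∀ k, 0 ≤ g k := fun k => by positivity
    have hgsum := summable_pi_prod summable_g_int hg0 d
    set K : ℝ := Real.exp (lam * Real.log B) with hK
    apply Summable.of_nonneg_of_le (fun j => (Real.exp_pos _).le) _ (hgsum.mul_left K)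
    intro j
    set xj : EuclideanSpace ℝ (Fin d) := WithLp.toLp 2 (fun i => (j i : ℝ)) with hxj
    set t : ℝ := 1 + ‖xj‖ with ht
    have ht1 : (1:ℝ) ≤ t := by simp [ht, norm_nonneg]
    have htpos : (0:ℝ) < t := by linarith
    have hnatcast : ((2 * d + 2 : ℕ) : ℝ) = 2 * (d:ℝ) + 2 := by push_cast; ring
    have hexp_eq : Real.exp ((2 * (d:ℝ) + 2) * Real.log t) = t ^ (2 * d + 2) := by
      rw [← hnatcast, Real.exp_nat_mul, Real.exp_log htpos]
    have hexp1 : Real.exp (-lam * η xj) ≤ K * (t ^ (2 * d + 2))⁻¹ := by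
      have hmul : (2 * (d:ℝ) + 2) * Real.log t ≤ lam * η xj + lam * Real.log B := by
        have hx := hAB xj
        have h1 : lam * (A * Real.log t) ≤ lam * (η xj + Real.log B) := by
          apply mul_le_mul_of_nonneg_left _ hlampos.le
          simpa [ht] using hx
        have h2 : lam * (A * Real.log t) = (2 * (d:ℝ) + 2) * Real.log t := by
          rw [hlam]; field_simp
        linarith [h1, h2.symm.le]
      have hle : Real.exp (-lam * η xj) ≤
          Real.exp (lam * Real.log B - (2 * (d:ℝ) + 2) * Real.log t) :=
        Real.exp_le_exp.mpr (by linarith)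
      refine hle.trans_eq ?_
      rw [Real.exp_sub, hexp_eq, hK, div_eq_mul_inv]
    have hprod : (t ^ (2 * d + 2))⁻¹ ≤ ∏ i, g (j i) := by
      have hprod_eq : ∏ i, g (j i) = (∏ i : Fin d, ((1:ℝ) + |(j i : ℝ)|) ^ 2)⁻¹ := by
        rw [hg, ← Finset.prod_inv_distrib]
      rw [hprod_eq]
      apply inv_anti₀ (by positivity)
      have hstep : ∏ i : Fin d, ((1:ℝ) + |(j i : ℝ)|) ^ 2
          = (∏ i : Fin d, ((1:ℝ) + |(j i : ℝ)|)) ^ 2 := by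
        rw [← Finset.prod_pow]
      rw [hstep]
      have hfac : ∏ i : Fin d, ((1:ℝ) + |(j i : ℝ)|) ≤ t ^ d := by
        have hp := Finset.prod_le_prod (s := Finset.univ) (f := fun i : Fin d => (1:ℝ) + |(j i : ℝ)|)
          (g := fun _ : Fin d => t)
          (fun i _ => by positivity)
          (fun i _ => by
            have hci : |(j i : ℝ)| ≤ ‖xj‖ := coord_abs_le_norm xj i
            show (1:ℝ) + |(j i : ℝ)| ≤ t
            rw [ht]; linarith)
        simpa [Finset.prod_const] using hp
      have hfacnn : 0 ≤ ∏ i : Fin d, ((1:ℝ) + |(j i : ℝ)|) :=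
        Finset.prod_nonneg fun i _ => by positivity
      calc (∏ i : Fin d, ((1:ℝ) + |(j i : ℝ)|)) ^ 2
          ≤ (t ^ d) ^ 2 := by apply pow_le_pow_left₀ hfacnn hfac
        _ = t ^ (2 * d) := by rw [← pow_mul]; ring_nf
        _ ≤ t ^ (2 * d + 2) := pow_le_pow_right₀ ht1 (by omega)
    calc Real.exp (-lam * η (WithLp.toLp 2 (fun i => (j i : ℝ))))
        = Real.exp (-lam * η xj) := rfl
      _ ≤ K * (t ^ (2 * d + 2))⁻¹ := hexp1
      _ ≤ K * ∏ i, g (j i) := by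
          apply mul_le_mul_of_nonneg_left hprod (Real.exp_pos _).le
end

section
/- Let η : ℝ^d → [0,∞) be a radially increasing weight function satisfying condition (α). Then ∑_{j ∈ ℤ^d} e^{-λ η(j)} < ∞ for every λ > 0 if and only if η satisfies condition (γ₀): ω(x)/log|x| → ∞ as |x| → ∞. -/
open Real Filter

lemma sumZ : Summable fun k : ℤ => ((1 + |(k : ℝ)|) ^ 2)⁻¹ := by
  have hN : Summable fun n : ℕ => ((1 + |((n : ℤ) : ℝ)|) ^ 2)⁻¹ := by
    have h2 : Summable fun n : ℕ => (((n : ℝ)) ^ 2)⁻¹ :=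
      Real.summable_nat_pow_inv.2 (by norm_num)
    have := (summable_nat_add_iff 1).2 h2
    refine this.congr fun n => ?_
    push_cast
    rw [Nat.abs_cast]
    ring_nf
  refine Summable.of_nat_of_neg hN ?_
  refine hN.congr fun n => ?_
  push_cast
  rw [abs_neg]

lemma sumPi (d : ℕ) : Summable fun j : Fin d → ℤ => ∏ i, ((1 + |((j i : ℤ) : ℝ)|) ^ 2)⁻¹ := by
  induction d with
  | zero =>
    simpa using summable_of_finite_support (Set.toFinite _)
  | succ d ih =>
    rw [← (Fin.consEquiv fun _ : Fin (d + 1) => ℤ).summable_iff]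
    have := sumZ.mul_of_nonneg ih (fun k => by positivity) (fun j => by positivity)
    refine this.congr fun p => ?_
    simp [Fin.consEquiv, Fin.prod_univ_succ, mul_comm]

lemma coord_le (d : ℕ) (x : EuclideanSpace ℝ (Fin d)) (i : Fin d) : |x i| ≤ ‖x‖ := by
  rw [EuclideanSpace.norm_eq]
  simp only [Real.norm_eq_abs, sq_abs]
  rw [← Real.sqrt_sq_eq_abs]
  apply Real.sqrt_le_sqrt
  exact Finset.single_le_sum (f := fun i => x i ^ 2) (fun i _ => sq_nonneg _) (Finset.mem_univ i)

lemma bwd (d : ℕ) (η : EuclideanSpace ℝ (Fin d) → ℝ)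
    (hnn : ∀ x, 0 ≤ η x)
    (hγ : Filter.Tendsto (fun x : EuclideanSpace ℝ (Fin d) => η x / Real.log ‖x‖)
        (Filter.comap (fun x : EuclideanSpace ℝ (Fin d) => ‖x‖) Filter.atTop)
        Filter.atTop)
    (lam : ℝ) (hlam : 0 < lam) :
    Summable (fun j : Fin d → ℤ => Real.exp (-lam * η (WithLp.toLp 2 (fun i => (j i : ℝ))))) := by
  set M : ℝ := (2 * d) / lam with hM
  have hev : {x : EuclideanSpace ℝ (Fin d) | M ≤ η x / Real.log ‖x‖} ∈
      Filter.comap (fun x : EuclideanSpace ℝ (Fin d) => ‖x‖) Filter.atTop :=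
    hγ (eventually_ge_atTop M)
  rw [Filter.mem_comap] at hev
  obtain ⟨t, ht, hsub⟩ := hev
  obtain ⟨N₀, hN₀⟩ := Filter.mem_atTop_sets.1 ht
  set N : ℝ := max N₀ 2 with hNdef
  have hN2 : (2:ℝ) ≤ N := le_max_right _ _
  have hNpos : (0:ℝ) < N := lt_of_lt_of_le (by norm_num) hN2
  have hMge : ∀ x : EuclideanSpace ℝ (Fin d), N ≤ ‖x‖ → M ≤ η x / Real.log ‖x‖ := by
    intro x hx
    exact hsub (hN₀ _ (le_trans (le_max_left _ _) hx))
  set K : ℝ := (N + 2) ^ (2 * d) with hK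
  have key : ∀ j : Fin d → ℤ,
      Real.exp (-lam * η (WithLp.toLp 2 (fun i => (j i : ℝ)))) ≤
        K * ∏ i, ((1 + |((j i : ℤ) : ℝ)|) ^ 2)⁻¹ := by
    intro j
    set v : EuclideanSpace ℝ (Fin d) := WithLp.toLp 2 (fun i => (j i : ℝ)) with hv
    have hcoord : ∀ i, |((j i : ℤ) : ℝ)| ≤ ‖v‖ := fun i => coord_le d v i
    set P : ℝ := ∏ i, (1 + |((j i : ℤ) : ℝ)|) ^ 2 with hP
    have hPpos : 0 < P := Finset.prod_pos fun i _ => by positivity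
    have hprodinv : (∏ i, ((1 + |((j i : ℤ) : ℝ)|) ^ 2)⁻¹) = P⁻¹ := by
      rw [hP, ← Finset.prod_inv_distrib]
    rw [hprodinv]
    rcases le_or_gt ‖v‖ N with hc | hc
    · have h1 : Real.exp (-lam * η v) ≤ 1 := by
        rw [Real.exp_le_one_iff]
        have := hnn v
        nlinarith
      have hPle : P ≤ K := by
        rw [hP, hK]
        calc ∏ i, (1 + |((j i : ℤ) : ℝ)|) ^ 2 ≤ ∏ _i : Fin d, (N + 2) ^ 2 := by
              refine Finset.prod_le_prod (fun i _ => by positivity) (fun i _ => ?_)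
              have h1 := hcoord i
              have h2 : 1 + |((j i : ℤ) : ℝ)| ≤ N + 2 := by nlinarith
              exact pow_le_pow_left₀ (by positivity) h2 2
          _ = (N + 2) ^ (2 * d) := by
              rw [Finset.prod_const, Finset.card_univ, Fintype.card_fin, ← pow_mul, mul_comm]
      calc Real.exp (-lam * η v) ≤ 1 := h1
        _ ≤ K * P⁻¹ := by
            rw [← div_eq_mul_inv, le_div_iff₀ hPpos, one_mul]
            exact hPle
    · have hr1 : (1:ℝ) < ‖v‖ := lt_of_lt_of_le (by norm_num) (le_trans hN2 hc.le)
      have hr0 : (0:ℝ) < ‖v‖ := lt_trans one_pos hr1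
      have hlog : 0 < Real.log ‖v‖ := Real.log_pos hr1
      have hη : M * Real.log ‖v‖ ≤ η v := by
        have := hMge v hc.le
        rw [le_div_iff₀ hlog] at this
        exact this
      have hexp : Real.exp (-lam * η v) ≤ (‖v‖ ^ (2 * d))⁻¹ := by
        have h2 : -lam * η v ≤ -(2 * d) * Real.log ‖v‖ := by
          have hlM : lam * M = 2 * d := by
            rw [hM]; field_simp
          nlinarith [hη, hlam]
        calc Real.exp (-lam * η v) ≤ Real.exp (-(2 * d) * Real.log ‖v‖) :=
              Real.exp_le_exp.2 h2
          _ = (‖v‖ ^ (2 * d))⁻¹ := by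
              rw [neg_mul, Real.exp_neg]
              congr 1
              rw [← Real.exp_log hr0, ← Real.exp_nat_mul, Real.exp_log hr0]
              push_cast
              ring_nf
      have hPle : P ≤ K * ‖v‖ ^ (2 * d) := by
        have hle1 : ∀ i, (1 + |((j i : ℤ) : ℝ)|) ^ 2 ≤ ((N + 2) * ‖v‖) ^ 2 := by
          intro i
          have h1 := hcoord i
          have : 1 + |((j i : ℤ) : ℝ)| ≤ (N + 2) * ‖v‖ := by nlinarith
          nlinarith [abs_nonneg ((j i : ℤ) : ℝ)]
        calc P ≤ ∏ _i : Fin d, ((N + 2) * ‖v‖) ^ 2 :=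
              Finset.prod_le_prod (fun i _ => by positivity) (fun i _ => hle1 i)
          _ = K * ‖v‖ ^ (2 * d) := by
              rw [Finset.prod_const, Finset.card_univ, Fintype.card_fin, hK,
                ← pow_mul, mul_pow, mul_comm 2 d, mul_comm d 2]
      calc Real.exp (-lam * η v) ≤ (‖v‖ ^ (2 * d))⁻¹ := hexp
        _ ≤ K * P⁻¹ := by
            rw [← div_eq_mul_inv, ← one_div, div_le_div_iff₀ (by positivity) hPpos, one_mul]
            nlinarith [hPle]
  exact Summable.of_nonneg_of_le (fun j => Real.exp_nonneg _) key ((sumPi d).mul_left K)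

lemma norm_single' (d : ℕ) (i0 : Fin d) (v : EuclideanSpace ℝ (Fin d)) (k : ℝ)
    (hv : ∀ i, v i = if i = i0 then k else 0) : ‖v‖ = |k| := by
  rw [EuclideanSpace.norm_eq]
  simp only [Real.norm_eq_abs, sq_abs]
  have h : ∀ i : Fin d, v i ^ 2 = if i = i0 then k ^ 2 else 0 := by
    intro i
    rw [hv i]
    by_cases hi : i = i0 <;> simp [hi]
  rw [Finset.sum_congr rfl (fun i _ => h i), Finset.sum_ite_eq' Finset.univ]
  simp [Real.sqrt_sq_eq_abs]

lemma fwd (d : ℕ) (hd : 0 < d) (η : EuclideanSpace ℝ (Fin d) → ℝ)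
    (hnn : ∀ x, 0 ≤ η x)
    (hrad : ∀ x y, ‖x‖ ≤ ‖y‖ → η x ≤ η y)
    (hs : ∀ lam : ℝ, 0 < lam →
        Summable (fun j : Fin d → ℤ => Real.exp (-lam * η (WithLp.toLp 2 (fun i => (j i : ℝ)))))) :
    Filter.Tendsto (fun x : EuclideanSpace ℝ (Fin d) => η x / Real.log ‖x‖)
        (Filter.comap (fun x : EuclideanSpace ℝ (Fin d) => ‖x‖) Filter.atTop)
        Filter.atTop := by
  by_contra h
  rw [Filter.tendsto_atTop] at h
  push_neg at h
  obtain ⟨b, hb⟩ := h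
  simp only [Filter.Frequently, not_lt, Filter.eventually_comap, Filter.eventually_atTop, not_exists, not_forall, exists_prop] at hb
  set b' : ℝ := max b 1 with hb'
  have hb'1 : (1:ℝ) ≤ b' := le_max_right _ _
  have hb'pos : (0:ℝ) < b' := lt_of_lt_of_le one_pos hb'1
  set lam : ℝ := 1 / (2 * b') with hlamdef
  have hlam : 0 < lam := by positivity
  have hlb : lam * b' = 1 / 2 := by rw [hlamdef]; field_simp
  have S := hs lam hlam
  set T : ℝ := ∑' j : Fin d → ℤ, Real.exp (-lam * η (WithLp.toLp 2 (fun i => (j i : ℝ)))) with hT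
  have hT0 : 0 ≤ T := tsum_nonneg fun _ => Real.exp_nonneg _
  set N : ℝ := max ((T + 1) ^ 2) 2 with hN
  obtain ⟨m, hmN, hm⟩ := hb N
  obtain ⟨x, hxm, hxb⟩ := hm
  replace hxb : η x / Real.log ‖x‖ < b := lt_of_not_ge hxb
  set r : ℝ := ‖x‖ with hr
  have hrN : N ≤ r := by rw [hxm]; exact hmN
  have hr2 : (2:ℝ) ≤ r := le_trans (le_max_right _ _) hrN
  have hr1 : (1:ℝ) < r := by linarith
  have hr0 : (0:ℝ) < r := by linarith
  have hlog : 0 < Real.log r := Real.log_pos hr1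
  have hηx : η x ≤ b' * Real.log r := by
    have h1 : η x < b * Real.log r := by
      rw [← div_lt_iff₀ hlog]
      exact hxb
    have h2 : b ≤ b' := le_max_left _ _
    nlinarith [hlog.le]
  set i0 : Fin d := ⟨0, hd⟩ with hi0
  have hinj : Function.Injective (fun k : ℤ => Pi.single (M := fun _ : Fin d => ℤ) i0 k) := by
    intro a c hac
    have := congrFun hac i0
    simpa using this
  set n : ℕ := ⌊r⌋₊ with hn
  have hnr : (n : ℝ) ≤ r := Nat.floor_le hr0.le
  have hrn : r < n + 1 := Nat.lt_floor_add_one r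
  have hsum_le : ∑ k ∈ Finset.Icc (-(n:ℤ)) (n:ℤ),
      Real.exp (-lam * η (WithLp.toLp 2 (fun i => ((Pi.single (M := fun _ : Fin d => ℤ) i0 k) i : ℝ)))) ≤ T := by
    have h0 := S.sum_le_tsum ((Finset.Icc (-(n:ℤ)) (n:ℤ)).map ⟨_, hinj⟩)
      (fun j _ => Real.exp_nonneg _)
    rw [Finset.sum_map] at h0
    exact h0
  have hterm : ∀ k ∈ Finset.Icc (-(n:ℤ)) (n:ℤ),
      Real.exp (-(1/2 : ℝ) * Real.log r) ≤
        Real.exp (-lam * η (WithLp.toLp 2 (fun i => ((Pi.single (M := fun _ : Fin d => ℤ) i0 k) i : ℝ)))) := by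
    intro k hk
    rw [Finset.mem_Icc] at hk
    have habs : |(k : ℝ)| ≤ r := by
      rw [abs_le]
      constructor
      · have : (-(n:ℤ) : ℝ) ≤ (k : ℝ) := by exact_mod_cast hk.1
        push_cast at this ⊢
        linarith
      · have : ((k : ℤ) : ℝ) ≤ (n : ℝ) := by exact_mod_cast hk.2
        linarith
    have hηk : η (WithLp.toLp 2 (fun i => ((Pi.single (M := fun _ : Fin d => ℤ) i0 k) i : ℝ))) ≤ η x := by
      apply hrad
      have hnk := norm_single' d i0
        (WithLp.toLp 2 (fun i => ((Pi.single (M := fun _ : Fin d => ℤ) i0 k) i : ℝ))) (k : ℝ)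
        (fun i => by by_cases hi : i = i0 <;> simp [Pi.single_apply, hi])
      rw [hnk]
      exact habs
    apply Real.exp_le_exp.2
    have hηk' : η (WithLp.toLp 2 (fun i => ((Pi.single (M := fun _ : Fin d => ℤ) i0 k) i : ℝ))) ≤
        b' * Real.log r := le_trans hηk hηx
    have hkn := hnn (WithLp.toLp 2 (fun i => ((Pi.single (M := fun _ : Fin d => ℤ) i0 k) i : ℝ)))
    nlinarith [hlb, hlam]
  have hcard : ((Finset.Icc (-(n:ℤ)) (n:ℤ)).card : ℝ) = 2 * (n : ℝ) + 1 := by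
    rw [Int.card_Icc]
    have h1 : ((n:ℤ) + 1 - -(n:ℤ)) = 2 * n + 1 := by ring
    rw [h1]
    rw [show ((2 : ℤ) * n + 1) = ((2 * n + 1 : ℕ) : ℤ) by push_cast; ring, Int.toNat_natCast]
    push_cast
    ring
  have hlower : ((Finset.Icc (-(n:ℤ)) (n:ℤ)).card : ℝ) * Real.exp (-(1/2 : ℝ) * Real.log r) ≤
      ∑ k ∈ Finset.Icc (-(n:ℤ)) (n:ℤ),
        Real.exp (-lam * η (WithLp.toLp 2 (fun i => ((Pi.single (M := fun _ : Fin d => ℤ) i0 k) i : ℝ)))) := by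
    have := Finset.card_nsmul_le_sum (Finset.Icc (-(n:ℤ)) (n:ℤ)) _ _ hterm
    simpa [nsmul_eq_mul] using this
  have hexp_eq : Real.exp (-(1/2 : ℝ) * Real.log r) = r ^ (-(1/2 : ℝ)) := by
    rw [Real.rpow_def_of_pos hr0, mul_comm]
  have hrpow_pos : 0 < r ^ (-(1/2 : ℝ)) := Real.rpow_pos_of_pos hr0 _
  have hfinal : Real.sqrt r ≤ T := by
    have h1 : r * r ^ (-(1/2 : ℝ)) ≤ (2 * (n : ℝ) + 1) * r ^ (-(1/2 : ℝ)) := by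
      apply mul_le_mul_of_nonneg_right _ hrpow_pos.le
      linarith
    have h2 : r * r ^ (-(1/2 : ℝ)) = Real.sqrt r := by
      nth_rewrite 1 [← Real.rpow_one r]
      rw [← Real.rpow_add hr0]
      norm_num
      rw [Real.sqrt_eq_rpow]
    calc Real.sqrt r = r * r ^ (-(1/2 : ℝ)) := h2.symm
      _ ≤ (2 * (n : ℝ) + 1) * r ^ (-(1/2 : ℝ)) := h1
      _ = ((Finset.Icc (-(n:ℤ)) (n:ℤ)).card : ℝ) * Real.exp (-(1/2 : ℝ) * Real.log r) := by
          rw [hcard, hexp_eq]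
      _ ≤ _ := hlower
      _ ≤ T := hsum_le
  have hsqN : T + 1 ≤ Real.sqrt r := by
    have h1 : Real.sqrt ((T + 1) ^ 2) ≤ Real.sqrt r :=
      Real.sqrt_le_sqrt (le_trans (le_max_left _ _) hrN)
    rwa [Real.sqrt_sq (by linarith)] at h1
  linarith

/-- For a radially increasing weight function η on ℝ^d satisfying (α),
∑_{j ∈ ℤ^d} e^{-λη(j)} < ∞ for every λ > 0 if and only if η satisfies (γ₀):
η(x)/log|x| → ∞ as |x| → ∞. -/
theorem summable_forall_iff_gamma0 (d : ℕ)
    (η : EuclideanSpace ℝ (Fin d) → ℝ)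
    (hnn : ∀ x, 0 ≤ η x)
    (hmeas : Measurable η)
    (hloc : ∀ r : ℝ, ∃ M : ℝ, ∀ x, ‖x‖ ≤ r → η x ≤ M)
    (hrad : ∀ x y, ‖x‖ ≤ ‖y‖ → η x ≤ η y)
    (L C : ℝ) (hL : 0 < L) (hC : 0 < C)
    (halpha : ∀ x y, η (x + y) ≤ L * (η x + η y) + Real.log C) :
    (∀ lam : ℝ, 0 < lam →
        Summable (fun j : Fin d → ℤ =>
          Real.exp (-lam * η (WithLp.toLp 2 (fun i => (j i : ℝ)))))) ↔
      Tendsto (fun x : EuclideanSpace ℝ (Fin d) => η x / Real.log ‖x‖)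
        (Filter.comap (fun x : EuclideanSpace ℝ (Fin d) => ‖x‖) Filter.atTop)
        Filter.atTop := by
  constructor
  · intro hs
    rcases Nat.eq_zero_or_pos d with hd | hd
    · subst hd
      have hbot : (Filter.comap (fun x : EuclideanSpace ℝ (Fin 0) => ‖x‖) Filter.atTop) = ⊥ := by
        rw [← Filter.empty_mem_iff_bot, Filter.mem_comap]
        refine ⟨Set.Ici 1, Filter.mem_atTop 1, fun x hx => ?_⟩
        have hx0 : x = 0 := WithLp.ofLp_injective 2 (funext fun i => i.elim0)
        rw [hx0] at hx
        simp only [Set.mem_preimage, Set.mem_Ici, norm_zero] at hx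
        norm_num at hx
      rw [hbot]
      exact Filter.tendsto_bot
    · exact fwd d hd η hnn hrad hs
  · intro hγ lam hlam
    exact bwd d η hnn hγ lam hlam
end

section
/- A tempered distribution φ on ℝ^d belongs to the Schwartz space S(ℝ^d) if and only if for every multi-index α, sup_{x} |x^α φ(x)| < ∞ and sup_{ξ} |ξ^α φ̂(ξ)| < ∞ (in particular φ and φ̂ are continuous functions). -/
open Real MeasureTheory SchwartzMap

open scoped ContDiff
open FourierTransform Finset



variable {d : ℕ}

lemma coord_le_norm (x : EuclideanSpace ℝ (Fin d)) (i : Fin d) : |x i| ≤ ‖x‖ := by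
  rw [EuclideanSpace.norm_eq, ← Real.sqrt_sq_eq_abs]
  apply Real.sqrt_le_sqrt
  calc x i ^ 2 = ‖x i‖ ^ 2 := by rw [Real.norm_eq_abs, sq_abs]
    _ ≤ ∑ j, ‖x j‖ ^ 2 :=
      Finset.single_le_sum (f := fun j => ‖x j‖ ^ 2) (fun j _ => sq_nonneg _) (Finset.mem_univ i)

lemma norm_prod_mul (f : EuclideanSpace ℝ (Fin d) → ℂ) (α : Fin d → ℕ)
    (x : EuclideanSpace ℝ (Fin d)) :
    ‖(∏ i, (x i : ℂ) ^ α i) * f x‖ = (∏ i, |x i| ^ α i) * ‖f x‖ := by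
  rw [norm_mul, norm_prod]
  congr 1
  refine Finset.prod_congr rfl fun i _ => ?_
  rw [norm_pow, Complex.norm_real, Real.norm_eq_abs]

/-- Forward bounds: a Schwartz function has all polynomial moments bounded. -/
lemma schwartz_prod_bound (ψ : SchwartzMap (EuclideanSpace ℝ (Fin d)) ℂ) (α : Fin d → ℕ) :
    ∃ M : ℝ, ∀ x, ‖(∏ i, (x i : ℂ) ^ α i) * ψ x‖ ≤ M := by
  obtain ⟨C, -, hC⟩ := ψ.decay (∑ i, α i) 0
  refine ⟨C, fun x => ?_⟩
  rw [norm_prod_mul]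
  calc (∏ i, |x i| ^ α i) * ‖ψ x‖ ≤ (∏ i, ‖x‖ ^ α i) * ‖ψ x‖ := by
        refine mul_le_mul_of_nonneg_right (Finset.prod_le_prod (fun j _ => pow_nonneg (abs_nonneg _) _) (fun i _ => pow_le_pow_left₀ (abs_nonneg _) (coord_le_norm x i) _)) (norm_nonneg _)
    _ = ‖x‖ ^ (∑ i, α i) * ‖ψ x‖ := by rw [← Finset.prod_pow_eq_pow_sum]
    _ ≤ C := by simpa using hC x


variable {d : ℕ}

/-- From bounds on all coordinate monomials, deduce rapid decay in `(1+‖x‖)^k` form. -/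
lemma decay_of_polybounds (f : EuclideanSpace ℝ (Fin d) → ℂ)
    (h : ∀ α : Fin d → ℕ, ∃ M : ℝ, ∀ x, ‖(∏ i, (x i : ℂ) ^ α i) * f x‖ ≤ M) :
    ∀ k : ℕ, ∃ C : ℝ, ∀ x, (1 + ‖x‖) ^ k * ‖f x‖ ≤ C := by
  -- bound on ‖f‖ itself
  obtain ⟨M₀, hM₀⟩ := h 0
  have hM₀' : ∀ x, ‖f x‖ ≤ M₀ := fun x => by simpa using hM₀ x
  -- step A : bounds for ‖x‖^(2m) * ‖f x‖
  have stepA : ∀ m : ℕ, ∃ C : ℝ, ∀ x, ‖x‖ ^ (2 * m) * ‖f x‖ ≤ C := by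
    intro m
    -- componentwise bounds
    have hMi : ∀ i : Fin d, ∃ M : ℝ, ∀ x, (x i) ^ (2 * m) * ‖f x‖ ≤ M := by
      intro i
      obtain ⟨M, hM⟩ := h (fun j => if j = i then 2 * m else 0)
      refine ⟨M, fun x => ?_⟩
      have := hM x
      simp only [pow_ite, pow_zero] at this
      rw [Finset.prod_ite_eq' Finset.univ i (fun j => (x j : ℂ) ^ (2 * m))] at this
      simp only [Finset.mem_univ, if_true] at this
      calc (x i) ^ (2 * m) * ‖f x‖ = ‖((x i : ℂ)) ^ (2 * m) * f x‖ := by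
            rw [norm_mul, norm_pow, Complex.norm_real, Real.norm_eq_abs, pow_mul, pow_mul, sq_abs]
        _ ≤ M := this
    choose Mi hMi using hMi
    refine ⟨(d : ℝ) ^ m * (∑ i, Mi i) + M₀, fun x => ?_⟩
    have hx2 : ‖x‖ ^ (2 * m) = (∑ j, (x j) ^ 2) ^ m := by
      rw [pow_mul, EuclideanSpace.norm_eq, Real.sq_sqrt (Finset.sum_nonneg fun j _ => sq_nonneg _)]
      congr 1
      exact Finset.sum_congr rfl fun j _ => by rw [Real.norm_eq_abs, sq_abs]
    have hMinn : ∀ i, 0 ≤ Mi i := fun i =>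
      le_trans (mul_nonneg ((even_two_mul m).pow_nonneg _) (norm_nonneg _)) (hMi i 0)
    rcases Nat.eq_zero_or_pos d with hd | hd
    · -- d = 0 : x = 0
      subst hd
      have hx0 : x = 0 := Subsingleton.elim x 0
      have hsum0 : (∑ i : Fin 0, Mi i) = 0 := by simp
      rcases Nat.eq_zero_or_pos m with hm | hm
      · subst hm
        simp only [Nat.mul_zero, pow_zero, one_mul, hsum0, mul_zero, zero_add]
        exact hM₀' x
      · rw [hx0, norm_zero, zero_pow (by omega), zero_mul]
        have : (0:ℝ) ≤ M₀ := le_trans (norm_nonneg (f 0)) (hM₀' 0)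
        nlinarith [pow_nonneg (Nat.cast_nonneg (0:ℕ) : (0:ℝ) ≤ (0:ℕ)) m]
    · -- d > 0 : use the max coordinate
      have : Nonempty (Fin d) := Fin.pos_iff_nonempty.mp hd
      have hne : (Finset.univ : Finset (Fin d)).Nonempty := Finset.univ_nonempty
      obtain ⟨i0, -, hi0⟩ := Finset.exists_max_image Finset.univ (fun j => (x j) ^ 2) hne
      have hsum : (∑ j, (x j) ^ 2) ≤ (d : ℝ) * (x i0) ^ 2 := by
        calc (∑ j, (x j) ^ 2) ≤ ∑ _j : Fin d, (x i0) ^ 2 :=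
              Finset.sum_le_sum fun j _ => hi0 j (Finset.mem_univ j)
          _ = (d : ℝ) * (x i0) ^ 2 := by simp [mul_comm]
      have hpow : ‖x‖ ^ (2 * m) ≤ (d : ℝ) ^ m * (x i0) ^ (2 * m) := by
        rw [hx2, pow_mul (x i0) 2 m, ← mul_pow]
        exact pow_le_pow_left₀ (Finset.sum_nonneg fun j _ => sq_nonneg _) hsum m
      calc ‖x‖ ^ (2 * m) * ‖f x‖ ≤ (d : ℝ) ^ m * ((x i0) ^ (2 * m) * ‖f x‖) := by
            rw [← mul_assoc]
            exact mul_le_mul_of_nonneg_right hpow (norm_nonneg _)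
        _ ≤ (d : ℝ) ^ m * (∑ i, Mi i) := by
            apply mul_le_mul_of_nonneg_left _ (by positivity)
            calc (x i0) ^ (2 * m) * ‖f x‖ ≤ Mi i0 := hMi i0 x
              _ ≤ ∑ i, Mi i := Finset.single_le_sum (f := fun i => Mi i)
                  (fun i _ => hMinn i) (Finset.mem_univ i0)
        _ ≤ (d : ℝ) ^ m * (∑ i, Mi i) + M₀ := by nlinarith [hM₀' x, norm_nonneg (f x)]
  -- step B
  intro k
  obtain ⟨C, hC⟩ := stepA k
  refine ⟨2 ^ k * (M₀ + C), fun x => ?_⟩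
  have h1 : (1 + ‖x‖) ^ k ≤ 2 ^ k * (1 + ‖x‖ ^ (2 * k)) := by
    rcases le_total ‖x‖ 1 with hx | hx
    · calc (1 + ‖x‖) ^ k ≤ 2 ^ k := pow_le_pow_left₀ (by positivity) (by linarith) k
        _ ≤ 2 ^ k * (1 + ‖x‖ ^ (2 * k)) := by
            nlinarith [pow_nonneg (norm_nonneg x) (2 * k), pow_nonneg (by norm_num : (0:ℝ) ≤ 2) k]
    · calc (1 + ‖x‖) ^ k ≤ (2 * ‖x‖) ^ k := pow_le_pow_left₀ (by positivity) (by linarith) k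
        _ = 2 ^ k * ‖x‖ ^ k := mul_pow 2 ‖x‖ k
        _ ≤ 2 ^ k * (1 + ‖x‖ ^ (2 * k)) := by
            have : ‖x‖ ^ k ≤ ‖x‖ ^ (2 * k) := pow_le_pow_right₀ hx (by omega)
            have h2 : (0:ℝ) ≤ 2 ^ k := by positivity
            nlinarith
  calc (1 + ‖x‖) ^ k * ‖f x‖ ≤ 2 ^ k * (1 + ‖x‖ ^ (2 * k)) * ‖f x‖ :=
        mul_le_mul_of_nonneg_right h1 (norm_nonneg _)
    _ = 2 ^ k * (‖f x‖ + ‖x‖ ^ (2 * k) * ‖f x‖) := by ring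
    _ ≤ 2 ^ k * (M₀ + C) := by
        apply mul_le_mul_of_nonneg_left _ (by positivity)
        exact add_le_add (hM₀' x) (hC x)


variable {d : ℕ}

/-- Integrability of polynomial moments from rapid decay. -/
lemma integrable_pow_mul_of_decay (f : EuclideanSpace ℝ (Fin d) → ℂ) (hf : Continuous f)
    (hdec : ∀ k : ℕ, ∃ C : ℝ, ∀ x, (1 + ‖x‖) ^ k * ‖f x‖ ≤ C) (n : ℕ) :
    Integrable (fun x : EuclideanSpace ℝ (Fin d) => ‖x‖ ^ n * ‖f x‖) := by
  obtain ⟨C, hC⟩ := hdec (n + (d + 1))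
  have hC0 : 0 ≤ C := le_trans (by positivity) (hC 0)
  have hd : (Module.finrank ℝ (EuclideanSpace ℝ (Fin d)) : ℝ) < (d + 1 : ℝ) := by
    simp [finrank_euclideanSpace_fin]
  refine Integrable.mono' (((integrable_one_add_norm (E := EuclideanSpace ℝ (Fin d))
      hd)).const_mul C) ?_ (ae_of_all _ fun x => ?_)
  · exact ((continuous_norm.pow n).mul hf.norm).aestronglyMeasurable
  · rw [Real.norm_eq_abs, abs_of_nonneg (by positivity)]
    have hpos : (0:ℝ) < 1 + ‖x‖ := by positivity
    rw [Real.rpow_neg (le_of_lt hpos)]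
    rw [mul_comm C, ← div_eq_inv_mul, le_div_iff₀ (Real.rpow_pos_of_pos hpos _)]
    have hr : (1 + ‖x‖) ^ ((d + 1 : ℝ)) = (1 + ‖x‖) ^ ((d + 1 : ℕ)) := by
      rw [← Real.rpow_natCast]
      norm_num
    rw [hr]
    calc ‖x‖ ^ n * ‖f x‖ * (1 + ‖x‖) ^ (d + 1)
        ≤ (1 + ‖x‖) ^ n * ‖f x‖ * (1 + ‖x‖) ^ (d + 1) := by
          refine mul_le_mul_of_nonneg_right (mul_le_mul_of_nonneg_right ?_ (norm_nonneg _))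
            (by positivity)
          exact pow_le_pow_left₀ (norm_nonneg x) (by linarith [norm_nonneg x]) n
      _ = (1 + ‖x‖) ^ (n + (d + 1)) * ‖f x‖ := by rw [pow_add]; ring
      _ ≤ C := hC x

/-- **Landau-type interpolation**: a function with rapid decay whose derivative is Lipschitz
has a rapidly decaying derivative. -/
lemma landau {V F : Type*} [NormedAddCommGroup V] [NormedSpace ℝ V]
    [NormedAddCommGroup F] [NormedSpace ℝ F]
    (g : V → F) (hg : Differentiable ℝ g) (D : ℝ) (hD : 0 ≤ D)
    (hlip : ∀ x y : V, ‖fderiv ℝ g y - fderiv ℝ g x‖ ≤ D * ‖y - x‖)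
    (hdec : ∀ k : ℕ, ∃ C : ℝ, ∀ x, (1 + ‖x‖) ^ k * ‖g x‖ ≤ C) :
    ∀ k : ℕ, ∃ C : ℝ, ∀ x, (1 + ‖x‖) ^ k * ‖fderiv ℝ g x‖ ≤ C := by
  -- Taylor-type estimate
  have key : ∀ x w : V, ‖g (x + w) - g x - fderiv ℝ g x w‖ ≤ D * ‖w‖ ^ 2 := by
    intro x w
    set A := fderiv ℝ g x with hA
    have hu : ∀ y : V, HasFDerivAt (fun z => g z - A z) (fderiv ℝ g y - A) y :=
      fun y => ((hg y).hasFDerivAt).sub (A.hasFDerivAt)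
    have hs : Convex ℝ (Metric.closedBall x ‖w‖) := convex_closedBall x ‖w‖
    have hbound : ∀ y ∈ Metric.closedBall x ‖w‖, ‖fderiv ℝ g y - A‖ ≤ D * ‖w‖ := by
      intro y hy
      refine le_trans (hlip x y) (mul_le_mul_of_nonneg_left ?_ hD)
      simpa [dist_eq_norm] using hy
    have hx : x ∈ Metric.closedBall x ‖w‖ := Metric.mem_closedBall_self (norm_nonneg w)
    have hxw : x + w ∈ Metric.closedBall x ‖w‖ := by
      simp [Metric.mem_closedBall, dist_eq_norm]
    have := hs.norm_image_sub_le_of_norm_hasFDerivWithin_le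
      (fun y hy => (hu y).hasFDerivWithinAt) hbound hx hxw
    calc ‖g (x + w) - g x - A w‖
        = ‖(g (x + w) - A (x + w)) - (g x - A x)‖ := by rw [map_add]; congr 1; abel
      _ ≤ D * ‖w‖ * ‖x + w - x‖ := this
      _ = D * ‖w‖ ^ 2 := by rw [add_sub_cancel_left]; ring
  intro k
  obtain ⟨C, hC⟩ := hdec (2 * k)
  have hC0 : 0 ≤ C := le_trans (by positivity) (hC 0)
  refine ⟨2 * (2 ^ (2 * k) * C) + D, fun x => ?_⟩
  set p : ℝ := (1 + ‖x‖) ^ k with hp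
  have hp1 : (1:ℝ) ≤ p := one_le_pow₀ (by linarith [norm_nonneg x])
  have hp0 : 0 < p := by linarith
  set t : ℝ := p⁻¹ with htdef
  have ht0 : 0 < t := inv_pos.mpr hp0
  have ht1 : t ≤ 1 := by
    rw [htdef]
    exact inv_le_one_of_one_le₀ hp1
  have hpt : p * t = 1 := mul_inv_cancel₀ (ne_of_gt hp0)
  -- bound on g near x
  have hgb : ∀ y : V, ‖y - x‖ ≤ 1 → ‖g y‖ ≤ 2 ^ (2 * k) * C * (t * t) := by
    intro y hy
    have h1 : (1 + ‖x‖) ≤ 2 * (1 + ‖y‖) := by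
      have h2 : ‖x‖ - ‖y‖ ≤ ‖x - y‖ := norm_sub_norm_le x y
      rw [← norm_neg (x - y), neg_sub] at h2
      linarith [norm_nonneg y]
    have h2 : (1 + ‖x‖) ^ (2 * k) ≤ 2 ^ (2 * k) * (1 + ‖y‖) ^ (2 * k) := by
      calc (1 + ‖x‖) ^ (2 * k) ≤ (2 * (1 + ‖y‖)) ^ (2 * k) :=
            pow_le_pow_left₀ (by positivity) h1 _
        _ = 2 ^ (2 * k) * (1 + ‖y‖) ^ (2 * k) := mul_pow 2 _ _
    have h3 : (1 + ‖y‖) ^ (2 * k) * ‖g y‖ ≤ C := hC y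
    have hp2 : p * p = (1 + ‖x‖) ^ (2 * k) := by rw [hp, ← pow_add]; ring_nf
    have h4 : ‖g y‖ * (p * p) ≤ 2 ^ (2 * k) * C := by
      rw [hp2]
      calc ‖g y‖ * (1 + ‖x‖) ^ (2 * k) ≤ ‖g y‖ * (2 ^ (2 * k) * (1 + ‖y‖) ^ (2 * k)) :=
            mul_le_mul_of_nonneg_left h2 (norm_nonneg _)
        _ = 2 ^ (2 * k) * ((1 + ‖y‖) ^ (2 * k) * ‖g y‖) := by ring
        _ ≤ 2 ^ (2 * k) * C := mul_le_mul_of_nonneg_left h3 (by positivity)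
    calc ‖g y‖ = ‖g y‖ * (p * p) * (t * t) := by
          rw [mul_assoc, mul_mul_mul_comm, hpt, one_mul, mul_one]
      _ ≤ 2 ^ (2 * k) * C * (t * t) :=
          mul_le_mul_of_nonneg_right h4 (by positivity)
  -- operator norm bound
  have hA : ‖fderiv ℝ g x‖ ≤ (2 * (2 ^ (2 * k) * C) + D) * t := by
    apply ContinuousLinearMap.opNorm_le_bound _ (by positivity)
    intro v
    rcases eq_or_ne v 0 with rfl | hv
    · simp
    · have hvn : 0 < ‖v‖ := norm_pos_iff.mpr hv
      set w : V := (t * ‖v‖⁻¹) • v with hw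
      have hwn : ‖w‖ = t := by
        rw [hw, norm_smul, Real.norm_eq_abs, abs_of_pos (by positivity)]
        field_simp
      have hAw : ‖fderiv ℝ g x w‖ = t * ‖v‖⁻¹ * ‖fderiv ℝ g x v‖ := by
        rw [hw, (fderiv ℝ g x).map_smul, norm_smul, Real.norm_eq_abs, abs_of_pos (by positivity)]
      have htri : ‖fderiv ℝ g x w‖ ≤ ‖g (x + w)‖ + ‖g x‖ + D * t ^ 2 := by
        have hkey := key x w
        have : ‖fderiv ℝ g x w‖ ≤ ‖g (x + w) - g x‖ + ‖g (x + w) - g x - fderiv ℝ g x w‖ := by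
          have := norm_sub_le (g (x + w) - g x) (g (x + w) - g x - fderiv ℝ g x w)
          simpa using this
        have h5 : ‖g (x + w) - g x‖ ≤ ‖g (x + w)‖ + ‖g x‖ := norm_sub_le _ _
        rw [hwn] at hkey
        linarith
      have hg1 : ‖g (x + w)‖ ≤ 2 ^ (2 * k) * C * (t * t) := by
        apply hgb
        simpa [hwn] using ht1
      have hg2 : ‖g x‖ ≤ 2 ^ (2 * k) * C * (t * t) := by
        apply hgb
        simp
      have h6 : ‖fderiv ℝ g x w‖ ≤ (2 * (2 ^ (2 * k) * C) + D) * (t * t) := by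
        have : D * t ^ 2 = D * (t * t) := by ring
        rw [this] at htri
        linarith
      -- translate to a bound on ‖A v‖
      have h7 : ‖fderiv ℝ g x v‖ = p * ‖v‖ * ‖fderiv ℝ g x w‖ := by
        rw [hAw]
        field_simp [htdef]
        rw [mul_assoc, hpt, mul_one]
      calc ‖fderiv ℝ g x v‖ = p * ‖v‖ * ‖fderiv ℝ g x w‖ := h7
        _ ≤ p * ‖v‖ * ((2 * (2 ^ (2 * k) * C) + D) * (t * t)) :=
            mul_le_mul_of_nonneg_left h6 (by positivity)
        _ = (p * t) * ((2 * (2 ^ (2 * k) * C) + D) * t) * ‖v‖ := by ring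
        _ = (2 * (2 ^ (2 * k) * C) + D) * t * ‖v‖ := by rw [hpt, one_mul]
  calc p * ‖fderiv ℝ g x‖ ≤ p * ((2 * (2 ^ (2 * k) * C) + D) * t) :=
        mul_le_mul_of_nonneg_left hA (le_of_lt hp0)
    _ = (p * t) * (2 * (2 ^ (2 * k) * C) + D) := by ring
    _ = 2 * (2 ^ (2 * k) * C) + D := by rw [hpt, one_mul]



lemma norm_fderiv_eq_iteratedFDeriv_one {V F : Type*} [NormedAddCommGroup V] [NormedSpace ℝ V]
    [NormedAddCommGroup F] [NormedSpace ℝ F] (g : V → F) (x : V) :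
    ‖fderiv ℝ g x‖ = ‖iteratedFDeriv ℝ 1 g x‖ := by
  rw [← norm_iteratedFDeriv_fderiv (n := 0), norm_iteratedFDeriv_zero]

universe u v

/-- Bootstrap: rapid decay of a smooth function with globally bounded derivatives implies
rapid decay of all iterated derivatives. -/
lemma iteratedFDeriv_decay : ∀ (n : ℕ) {V : Type u} {F : Type (max u v)}
    [NormedAddCommGroup V] [NormedSpace ℝ V]
    [NormedAddCommGroup F] [NormedSpace ℝ F] (f : V → F), ContDiff ℝ ∞ f →
    (∀ m : ℕ, ∃ D : ℝ, ∀ x, ‖iteratedFDeriv ℝ m f x‖ ≤ D) →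
    (∀ k : ℕ, ∃ C : ℝ, ∀ x, (1 + ‖x‖) ^ k * ‖f x‖ ≤ C) →
    ∀ k : ℕ, ∃ C : ℝ, ∀ x, (1 + ‖x‖) ^ k * ‖iteratedFDeriv ℝ n f x‖ ≤ C := by
  intro n
  induction n with
  | zero =>
    intro V F _ _ _ _ f hf hb hdec k
    obtain ⟨C, hC⟩ := hdec k
    exact ⟨C, fun x => by simpa [norm_iteratedFDeriv_zero] using hC x⟩
  | succ n ih =>
    intro V F _ _ _ _ f hf hb hdec k
    -- apply the induction hypothesis to `fderiv ℝ f`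
    have hf' : ContDiff ℝ ∞ (fderiv ℝ f) := (hf.fderiv_right (by exact_mod_cast le_top) : ContDiff ℝ ∞ _)
    have hb' : ∀ m : ℕ, ∃ D : ℝ, ∀ x, ‖iteratedFDeriv ℝ m (fderiv ℝ f) x‖ ≤ D := by
      intro m
      obtain ⟨D, hD⟩ := hb (m + 1)
      exact ⟨D, fun x => by rw [norm_iteratedFDeriv_fderiv]; exact hD x⟩
    have hdec' : ∀ k : ℕ, ∃ C : ℝ, ∀ x, (1 + ‖x‖) ^ k * ‖fderiv ℝ f x‖ ≤ C := by
      -- Landau interpolation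
      obtain ⟨D, hD⟩ := hb 2
      have hD0 : 0 ≤ D := le_trans (norm_nonneg _) (hD 0)
      apply landau f (hf.differentiable (by simp)) D hD0 _ hdec
      intro x y
      have hdb : ∀ z, ‖fderiv ℝ (fderiv ℝ f) z‖ ≤ D := by
        intro z
        rw [norm_fderiv_eq_iteratedFDeriv_one, norm_iteratedFDeriv_fderiv]
        exact hD z
      have := (convex_univ : Convex ℝ (Set.univ : Set V)).norm_image_sub_le_of_norm_fderiv_le
        (f := fderiv ℝ f) (fun z _ => (hf'.differentiable (by simp)) z)
        (fun z _ => hdb z) (Set.mem_univ y) (Set.mem_univ x)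
      simpa [norm_sub_rev] using this
    obtain ⟨C, hC⟩ := ih (fderiv ℝ f) hf' hb' hdec' k
    exact ⟨C, fun x => by rw [← norm_iteratedFDeriv_fderiv]; exact hC x⟩


variable {d : ℕ}

local notation "V" => EuclideanSpace ℝ (Fin d)

lemma innerl_flip : (innerₗ (EuclideanSpace ℝ (Fin d))).flip = innerₗ (EuclideanSpace ℝ (Fin d)) := by
  apply LinearMap.ext; intro x
  apply LinearMap.ext; intro y
  simpa using real_inner_comm y x

/-- Multiplication formula for the Fourier transform. -/
lemma fourier_mul_flip {f g : EuclideanSpace ℝ (Fin d) → ℂ}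
    (hf : Integrable f) (hg : Integrable g) :
    ∫ ξ, 𝓕 f ξ * g ξ = ∫ x, f x * 𝓕 g x := by
  have := VectorFourier.integral_fourierIntegral_smul_eq_flip
    (e := Real.fourierChar) (L := innerₗ (EuclideanSpace ℝ (Fin d)))
    (μ := (volume : Measure V)) (ν := (volume : Measure V))
    Real.continuous_fourierChar (by exact continuous_inner) hf hg
  rw [innerl_flip] at this
  simp only [smul_eq_mul] at this
  exact this

/-- Boundedness of all derivatives of the Fourier transform of a rapidly decreasing function. -/
lemma fourier_iteratedFDeriv_bound (h : EuclideanSpace ℝ (Fin d) → ℂ)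
    (hmeas : AEStronglyMeasurable h (volume : Measure V))
    (hint : ∀ n : ℕ, Integrable (fun v : V => ‖v‖ ^ n * ‖h v‖)) (n : ℕ) :
    ∃ C : ℝ, ∀ w, ‖iteratedFDeriv ℝ n (𝓕 h) w‖ ≤ C := by
  have heq := Real.iteratedFDeriv_fourier (f := h) (N := (n : ℕ∞))
    (fun m _ => hint m) hmeas (le_refl (n : ℕ∞))
  refine ⟨(2 * π * ‖innerSL ℝ (E := V)‖) ^ n * ∫ v, ‖v‖ ^ n * ‖h v‖, fun w => ?_⟩
  rw [heq]
  refine le_trans (VectorFourier.norm_fourierIntegral_le_integral_norm _ _ _ _ _) ?_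
  rw [← integral_const_mul]
  refine integral_mono_of_nonneg (ae_of_all _ fun v => norm_nonneg _)
    (((hint n).const_mul _)) (ae_of_all _ fun v => ?_)
  refine le_trans (VectorFourier.norm_fourierPowSMulRight_le _ _ _ _) (le_of_eq ?_)
  ring

/-- A real smooth compactly supported function, viewed as a complex Schwartz function. -/
noncomputable def toSchwartzC (g : EuclideanSpace ℝ (Fin d) → ℝ) (hg : ContDiff ℝ ∞ g)
    (hsupp : HasCompactSupport g) : SchwartzMap (EuclideanSpace ℝ (Fin d)) ℂ where
  toFun := fun x => (g x : ℂ)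
  smooth' := Complex.ofRealCLM.contDiff.comp hg
  decay' := by
    intro k n
    have hcs : HasCompactSupport (fun x : V => (g x : ℂ)) :=
      hsupp.comp_left (g := fun r : ℝ => (r : ℂ)) (by simp)
    have hsm : ContDiff ℝ ∞ (fun x : V => (g x : ℂ)) := Complex.ofRealCLM.contDiff.comp hg
    have hD : HasCompactSupport (fun x : V => ‖x‖ ^ k * ‖iteratedFDeriv ℝ n (fun x : V => (g x : ℂ)) x‖) := by
      apply HasCompactSupport.mul_left
      exact (hcs.iteratedFDeriv n).norm
    have hCont : Continuous (fun x : V => ‖x‖ ^ k * ‖iteratedFDeriv ℝ n (fun x : V => (g x : ℂ)) x‖) :=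
      (continuous_norm.pow k).mul (hsm.continuous_iteratedFDeriv (by exact_mod_cast le_top)).norm
    obtain ⟨C, hC⟩ := hCont.bounded_above_of_compact_support hD
    refine ⟨C, fun x => ?_⟩
    have := hC x
    rw [Real.norm_eq_abs, abs_of_nonneg (by positivity)] at this
    exact this

@[simp] lemma toSchwartzC_apply (g : EuclideanSpace ℝ (Fin d) → ℝ) (hg : ContDiff ℝ ∞ g)
    (hsupp : HasCompactSupport g) (x : EuclideanSpace ℝ (Fin d)) :
    toSchwartzC g hg hsupp x = (g x : ℂ) := rfl

/-- A continuous function pairing to zero against all Schwartz functions vanishes. -/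
lemma eq_zero_of_integral_schwartz (u : EuclideanSpace ℝ (Fin d) → ℂ) (hu : Continuous u)
    (h : ∀ g : SchwartzMap (EuclideanSpace ℝ (Fin d)) ℂ, ∫ x, u x * g x = 0) :
    u = 0 := by
  have hae : u =ᵐ[(volume : Measure V)] 0 := by
    apply ae_eq_zero_of_integral_contDiff_smul_eq_zero (hu.locallyIntegrable)
    intro g hgsm hgsupp
    have := h (toSchwartzC g hgsm hgsupp)
    rw [← this]
    congr 1
    ext x
    rw [toSchwartzC_apply, Complex.real_smul, mul_comm]
  exact (hu.ae_eq_iff_eq volume continuous_const).mp hae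

/-- a tempered distribution `T` on ℝ^d is (given by) a Schwartz function if and
only if `T` and its Fourier transform are given by continuous functions `f`, `fhat` with
`sup_x |x^α f(x)| < ∞` and `sup_ξ |ξ^α fhat(ξ)| < ∞` for every multi-index `α`. -/
theorem temperedDistribution_schwartz_iff (d : ℕ)
    (T : SchwartzMap (EuclideanSpace ℝ (Fin d)) ℂ →L[ℂ] ℂ) :
    (∃ ψ : SchwartzMap (EuclideanSpace ℝ (Fin d)) ℂ,
        ∀ g : SchwartzMap (EuclideanSpace ℝ (Fin d)) ℂ, T g = ∫ x, ψ x * g x) ↔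
    (∃ f fhat : EuclideanSpace ℝ (Fin d) → ℂ,
        Continuous f ∧ Continuous fhat ∧
        (∀ g : SchwartzMap (EuclideanSpace ℝ (Fin d)) ℂ, T g = ∫ x, f x * g x) ∧
        (∀ g : SchwartzMap (EuclideanSpace ℝ (Fin d)) ℂ,
          T (SchwartzMap.fourierTransformCLM ℂ g) = ∫ ξ, fhat ξ * g ξ) ∧
        (∀ α : Fin d → ℕ, ∃ M : ℝ,
          ∀ x, ‖(∏ i, (x i : ℂ) ^ α i) * f x‖ ≤ M) ∧
        (∀ α : Fin d → ℕ, ∃ M : ℝ,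
          ∀ ξ, ‖(∏ i, (ξ i : ℂ) ^ α i) * fhat ξ‖ ≤ M)) := by
  constructor
  · rintro ⟨ψ, hψ⟩
    refine ⟨⇑ψ, ⇑(fourierTransformCLM ℂ ψ), ψ.continuous,
      (fourierTransformCLM ℂ ψ).continuous, hψ, ?_,
      fun α => schwartz_prod_bound ψ α, fun α => schwartz_prod_bound _ α⟩
    intro g
    rw [hψ (fourierTransformCLM ℂ g)]
    have hmf := fourier_mul_flip (f := ⇑ψ) (g := ⇑g) ψ.integrable g.integrable
    calc ∫ x, ψ x * (fourierTransformCLM ℂ g) x = ∫ x, ψ x * 𝓕 (⇑g) x := rfl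
      _ = ∫ ξ, 𝓕 (⇑ψ) ξ * g ξ := hmf.symm
      _ = ∫ ξ, (fourierTransformCLM ℂ ψ) ξ * g ξ := rfl
  · rintro ⟨f, fhat, hfc, hfhatc, hTf, hThat, hbf, hbfhat⟩
    have df := decay_of_polybounds f hbf
    have dfhat := decay_of_polybounds fhat hbfhat
    have hif : ∀ n, Integrable (fun x : EuclideanSpace ℝ (Fin d) => ‖x‖ ^ n * ‖f x‖) :=
      integrable_pow_mul_of_decay f hfc df
    have hifhat := integrable_pow_mul_of_decay fhat hfhatc dfhat
    have hfint : Integrable f := by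
      have h0 := hif 0
      simp only [pow_zero, one_mul] at h0
      exact (integrable_norm_iff hfc.aestronglyMeasurable).mp h0
    have hfhatint : Integrable fhat := by
      have h0 := hifhat 0
      simp only [pow_zero, one_mul] at h0
      exact (integrable_norm_iff hfhatc.aestronglyMeasurable).mp h0
    -- continuity and boundedness of 𝓕 f
    have hFTc : Continuous (𝓕 f) :=
      VectorFourier.fourierIntegral_continuous Real.continuous_fourierChar
        (by exact continuous_inner) hfint
    have hFTbdd : ∃ C : ℝ, ∀ ξ, ‖𝓕 f ξ‖ ≤ C :=
      ⟨∫ x, ‖f x‖, fun ξ => VectorFourier.norm_fourierIntegral_le_integral_norm _ _ _ _ _⟩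
    obtain ⟨Cf, hCf⟩ := dfhat 0
    have hfhatbdd : ∃ C : ℝ, ∀ ξ, ‖fhat ξ‖ ≤ C :=
      ⟨Cf, fun ξ => by simpa using hCf ξ⟩
    -- fhat = 𝓕 f
    have key : ∀ g : SchwartzMap (EuclideanSpace ℝ (Fin d)) ℂ,
        ∫ ξ, (𝓕 f ξ - fhat ξ) * g ξ = 0 := by
      intro g
      have h1 : ∫ ξ, 𝓕 f ξ * g ξ = ∫ x, f x * 𝓕 (⇑g) x := fourier_mul_flip hfint g.integrable
      have h3 : ∫ ξ, 𝓕 f ξ * g ξ = ∫ ξ, fhat ξ * g ξ := by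
        rw [h1, ← hThat g, hTf (fourierTransformCLM ℂ g)]
        rfl
      have i1 : Integrable (fun ξ => 𝓕 f ξ * g ξ) :=
        g.integrable.bdd_mul hFTc.aestronglyMeasurable (ae_of_all _ hFTbdd.choose_spec)
      have i2 : Integrable (fun ξ => fhat ξ * g ξ) :=
        g.integrable.bdd_mul hfhatc.aestronglyMeasurable (ae_of_all _ hfhatbdd.choose_spec)
      simp only [sub_mul]
      rw [integral_sub i1 i2, h3, sub_self]
    have hzero : (fun ξ => 𝓕 f ξ - fhat ξ) = 0 :=
      eq_zero_of_integral_schwartz _ (hFTc.sub hfhatc) key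
    have hhat_eq : fhat = 𝓕 f := by
      funext ξ
      have := congrFun hzero ξ
      simp only [Pi.zero_apply, sub_eq_zero] at this
      exact this.symm
    have hFfint : Integrable (𝓕 f) := hhat_eq ▸ hfhatint
    have hinv : 𝓕⁻ (𝓕 f) = f := hfc.fourierInv_fourier_eq hfint hFfint
    have hfeq : f = (𝓕 fhat) ∘ (fun x => -x) := by
      funext x
      rw [← congrFun hinv x, hhat_eq]
      exact Real.fourierInv_eq_fourier_neg _ x
    -- smoothness of f
    have hFsm : ContDiff ℝ ∞ (𝓕 fhat) :=
      Real.contDiff_fourier (N := (⊤ : ℕ∞)) (fun n _ => hifhat n)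
    have hfsm : ContDiff ℝ ∞ f := by
      rw [hfeq]
      exact hFsm.comp contDiff_neg
    -- boundedness of all derivatives of f
    have hb : ∀ m, ∃ D : ℝ, ∀ x, ‖iteratedFDeriv ℝ m f x‖ ≤ D := by
      intro m
      obtain ⟨C, hC⟩ := fourier_iteratedFDeriv_bound fhat hfhatc.aestronglyMeasurable hifhat m
      refine ⟨C, fun x => ?_⟩
      have hcomp : f = (𝓕 fhat) ∘ (LinearIsometryEquiv.neg ℝ (E := EuclideanSpace ℝ (Fin d))) :=
        hfeq
      rw [hcomp, LinearIsometryEquiv.norm_iteratedFDeriv_comp_right]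
      exact hC _
    refine ⟨⟨f, hfsm, ?_⟩, hTf⟩
    intro k n
    obtain ⟨C, hC⟩ := iteratedFDeriv_decay n f hfsm hb df k
    refine ⟨C, fun x => le_trans ?_ (hC x)⟩
    refine mul_le_mul_of_nonneg_right ?_ (norm_nonneg _)
    exact pow_le_pow_left₀ (norm_nonneg x) (by linarith [norm_nonneg x]) k
end

section
/- Let η be a weight function on ℝ^d satisfying conditions (α) and (γ), let χ ∈ C_c^∞(ℝ^d) be non-negative with ∫χ = 1, and for λ > 0 set Ψ_λ(x) = exp(λL ∫_{ℝ^d} χ(y) η(x+y) dy), where L is the constant from (α). Then there exist constants c_λ, C_λ > 0 such that c_λ e^{λη(x)} ≤ Ψ_λ(x) ≤ C_λ e^{L²λη(x)} for all x ∈ ℝ^d. -/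
open Real MeasureTheory

/-- for a weight function η satisfying (α) (with constant L ≥ 1) and (γ), and
a non-negative χ ∈ C_c^∞ with ∫χ = 1, the regularized weight
Ψ_λ(x) = exp(λL ∫ χ(y) η(x+y) dy) satisfies
c_λ e^{λη(x)} ≤ Ψ_λ(x) ≤ C_λ e^{L²λη(x)}. -/
theorem regularized_weight_bounds (d : ℕ)
    (η : EuclideanSpace ℝ (Fin d) → ℝ)
    (hnn : ∀ x, 0 ≤ η x)
    (hmeas : Measurable η)
    (hloc : ∀ r : ℝ, ∃ M : ℝ, ∀ x, ‖x‖ ≤ r → η x ≤ M)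
    (L C : ℝ) (hL : 1 ≤ L) (hC : 0 < C)
    (halpha : ∀ x y, η (x + y) ≤ L * (η x + η y) + Real.log C)
    (A B : ℝ) (hA : 0 < A) (hB : 0 < B)
    (hgamma : ∀ x, A * Real.log (1 + ‖x‖) ≤ η x + Real.log B)
    (χ : EuclideanSpace ℝ (Fin d) → ℝ)
    (hχsmooth : ContDiff ℝ (⊤ : ℕ∞) χ) (hχsupp : HasCompactSupport χ)
    (hχnn : ∀ y, 0 ≤ χ y) (hχint : ∫ y, χ y = 1)
    (lam : ℝ) (hlam : 0 < lam)
    (Ψ : EuclideanSpace ℝ (Fin d) → ℝ)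
    (hΨ : ∀ x, Ψ x = Real.exp (lam * L * ∫ y, χ y * η (x + y))) :
    ∃ c Cl : ℝ, 0 < c ∧ 0 < Cl ∧ ∀ x,
      c * Real.exp (lam * η x) ≤ Ψ x ∧
      Ψ x ≤ Cl * Real.exp (L ^ 2 * lam * η x) := by
  have hL0 : (0:ℝ) < L := lt_of_lt_of_le one_pos hL
  obtain ⟨R, hR⟩ := hχsupp.isBounded.subset_closedBall 0
  obtain ⟨M, hM⟩ := hloc R
  set K := L * M + Real.log C with hK
  refine ⟨Real.exp (-(lam * K)), Real.exp (lam * L * K), Real.exp_pos _, Real.exp_pos _,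
    fun x => ?_⟩
  obtain ⟨Mx, hMx⟩ := hloc (‖x‖ + R)
  have hχcont : Continuous χ := hχsmooth.continuous
  have hχint' : Integrable χ := hχcont.integrable_of_hasCompactSupport hχsupp
  have hmeasf : Measurable fun y => χ y * η (x + y) :=
    hχcont.measurable.mul (hmeas.comp (measurable_const_add x))
  have hfint : Integrable (fun y => χ y * η (x + y)) := by
    refine Integrable.mono' (hχint'.const_mul Mx) hmeasf.aestronglyMeasurable
      (Filter.Eventually.of_forall fun y => ?_)
    by_cases hy : y ∈ tsupport χ
    · have hyR : ‖y‖ ≤ R := by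
        have := hR hy; simpa [Metric.mem_closedBall] using this
      have hb : ‖x + y‖ ≤ ‖x‖ + R := le_trans (norm_add_le _ _) (by linarith)
      have hη : η (x + y) ≤ Mx := hMx _ hb
      rw [Real.norm_eq_abs, abs_of_nonneg (mul_nonneg (hχnn y) (hnn _)), mul_comm Mx (χ y)]
      exact mul_le_mul_of_nonneg_left hη (hχnn y)
    · simp [image_eq_zero_of_notMem_tsupport hy]
  -- lower bound on the integral
  have hlow : (η x - K) / L ≤ ∫ y, χ y * η (x + y) := by
    have heq : (∫ y, χ y * ((η x - K) / L)) = (η x - K) / L := by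
      rw [integral_mul_const, hχint, one_mul]
    rw [← heq]
    refine integral_mono (hχint'.mul_const _) hfint fun y => ?_
    by_cases hy : y ∈ tsupport χ
    · have hyR : ‖y‖ ≤ R := by
        have := hR hy; simpa [Metric.mem_closedBall] using this
      have hηy : η (-y) ≤ M := hM _ (by simpa using hyR)
      have h1 : η x ≤ L * η (x + y) + K := by
        have := halpha (x + y) (-y)
        simp only [add_neg_cancel_right] at this
        nlinarith [hnn (x+y)]
      have h2 : (η x - K) / L ≤ η (x + y) := by
        rw [div_le_iff₀ hL0]; nlinarith
      exact mul_le_mul_of_nonneg_left h2 (hχnn y)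
    · simp [image_eq_zero_of_notMem_tsupport hy]
  -- upper bound on the integral
  have hup : (∫ y, χ y * η (x + y)) ≤ L * η x + K := by
    have heq : (∫ y, χ y * (L * η x + K)) = L * η x + K := by
      rw [integral_mul_const, hχint, one_mul]
    rw [← heq]
    refine integral_mono hfint (hχint'.mul_const _) fun y => ?_
    by_cases hy : y ∈ tsupport χ
    · have hyR : ‖y‖ ≤ R := by
        have := hR hy; simpa [Metric.mem_closedBall] using this
      have hηy : η y ≤ M := hM _ hyR
      have h1 : η (x + y) ≤ L * η x + K := by
        have := halpha x y
        nlinarith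
      exact mul_le_mul_of_nonneg_left h1 (hχnn y)
    · simp [image_eq_zero_of_notMem_tsupport hy]
  rw [hΨ]
  constructor
  · rw [← Real.exp_add, Real.exp_le_exp]
    have : lam * L * ((η x - K) / L) ≤ lam * L * ∫ y, χ y * η (x + y) :=
      mul_le_mul_of_nonneg_left hlow (by positivity)
    calc -(lam * K) + lam * η x = lam * L * ((η x - K) / L) := by
          field_simp; ring
      _ ≤ _ := this
  · rw [← Real.exp_add, Real.exp_le_exp]
    have : lam * L * ∫ y, χ y * η (x + y) ≤ lam * L * (L * η x + K) :=
      mul_le_mul_of_nonneg_left hup (by positivity)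
    calc lam * L * ∫ y, χ y * η (x + y) ≤ lam * L * (L * η x + K) := this
      _ = lam * L * K + L ^ 2 * lam * η x := by ring
end

section
/- Let ω, η be weight functions on ℝ^d satisfying (α), with the Beurling–Björck space S^{(ω)}_{(η)}(ℝ^d) ≠ {0}. If ω and η satisfy condition (γ), then S^{(ω)}_{(η)}(ℝ^d) is contained in the Schwartz space S(ℝ^d). -/
open Real MeasureTheory SchwartzMap

open scoped FourierTransform RealInnerProductSpace

section Helpers

variable {V E : Type*} [NormedAddCommGroup V] [NormedSpace ℝ V]
  [NormedAddCommGroup E] [NormedSpace ℝ E]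

lemma landau_bound' (F : V → E) (hF : Differentiable ℝ F) {B : ℝ} (hB0 : 0 ≤ B)
    (hlip : ∀ y z : V, ‖fderiv ℝ F y - fderiv ℝ F z‖ ≤ B * ‖y - z‖)
    {x : V} {t A : ℝ} (ht : 0 < t) (hA : ∀ y, ‖y - x‖ ≤ t → ‖F y‖ ≤ A) :
    ‖fderiv ℝ F x‖ ≤ 2 * A / t + B * t := by
  have hA0 : 0 ≤ A := le_trans (norm_nonneg _) (hA x (by simp [ht.le]))
  apply ContinuousLinearMap.opNorm_le_bound
  · positivity
  intro v
  rcases eq_or_ne v 0 with rfl | hv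
  · simp
  have hvn : (0:ℝ) < ‖v‖ := norm_pos_iff.mpr hv
  set w : V := (t / ‖v‖) • v with hw
  have hwn : ‖w‖ = t := by
    rw [hw, norm_smul, Real.norm_eq_abs, abs_of_pos (by positivity), div_mul_cancel₀ _ hvn.ne']
  set H : ℝ → E := fun s => F (x + s • w) - s • (fderiv ℝ F x w) with hH
  have hderiv : ∀ s ∈ Set.Icc (0:ℝ) 1,
      HasDerivWithinAt H (fderiv ℝ F (x + s • w) w - fderiv ℝ F x w) (Set.Icc 0 1) s := by
    intro s _
    have h1 : HasDerivAt (fun s : ℝ => x + s • w) w s := by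
      simpa using ((hasDerivAt_id s).smul_const w).const_add x
    have h2 : HasDerivAt (fun s : ℝ => F (x + s • w)) (fderiv ℝ F (x + s • w) w) s := by
      exact (hF (x + s • w)).hasFDerivAt.comp_hasDerivAt s h1
    exact (h2.sub (by simpa using (hasDerivAt_id s).smul_const (fderiv ℝ F x w))).hasDerivWithinAt
  have hbound : ∀ s ∈ Set.Ico (0:ℝ) 1,
      ‖fderiv ℝ F (x + s • w) w - fderiv ℝ F x w‖ ≤ B * t * t := by
    intro s hs
    have h1 : ‖fderiv ℝ F (x + s • w) - fderiv ℝ F x‖ ≤ B * t := by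
      have := hlip (x + s • w) x
      simp only [add_sub_cancel_left] at this
      refine this.trans ?_
      have : ‖s • w‖ ≤ t := by
        rw [norm_smul, Real.norm_eq_abs, abs_of_nonneg hs.1, hwn]
        nlinarith [hs.1, hs.2.le, ht.le]
      nlinarith
    calc ‖fderiv ℝ F (x + s • w) w - fderiv ℝ F x w‖
        = ‖(fderiv ℝ F (x + s • w) - fderiv ℝ F x) w‖ := by simp
      _ ≤ ‖fderiv ℝ F (x + s • w) - fderiv ℝ F x‖ * ‖w‖ := ContinuousLinearMap.le_opNorm _ _
      _ ≤ B * t * t := by rw [hwn]; exact mul_le_mul_of_nonneg_right h1 ht.le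
  have key := norm_image_sub_le_of_norm_deriv_le_segment' hderiv hbound 1 (by norm_num)
  have hH1 : ‖H 1 - H 0‖ ≤ B * t * t := by simpa using key
  have hkey : ‖fderiv ℝ F x w‖ ≤ 2 * A + B * t * t := by
    have e1 : H 1 - H 0 = F (x + w) - fderiv ℝ F x w - F x := by
      simp [hH]
    have h2 : ‖F (x + w)‖ ≤ A := hA _ (by simp [hwn])
    have h3 : ‖F x‖ ≤ A := hA x (by simp [ht.le])
    rw [e1] at hH1
    have e2 : fderiv ℝ F x w =
        F (x + w) - F x - (F (x + w) - fderiv ℝ F x w - F x) := by abel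
    calc ‖fderiv ℝ F x w‖
        = ‖F (x + w) - F x - (F (x + w) - fderiv ℝ F x w - F x)‖ := by rw [← e2]
      _ ≤ ‖F (x + w) - F x‖ + ‖F (x + w) - fderiv ℝ F x w - F x‖ := norm_sub_le _ _
      _ ≤ (‖F (x + w)‖ + ‖F x‖) + B * t * t := add_le_add (norm_sub_le _ _) hH1
      _ ≤ 2 * A + B * t * t := by linarith
  have hvw : fderiv ℝ F x v = (‖v‖ / t) • fderiv ℝ F x w := by
    rw [← (fderiv ℝ F x).map_smul, hw, smul_smul]
    congr 1
    field_simp; simp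
  rw [hvw, norm_smul, Real.norm_eq_abs, abs_of_pos (by positivity)]
  calc ‖v‖ / t * ‖fderiv ℝ F x w‖ ≤ ‖v‖ / t * (2 * A + B * t * t) := by
        apply mul_le_mul_of_nonneg_left hkey (by positivity)
    _ = (2 * A / t + B * t) * ‖v‖ := by field_simp

lemma decay_bootstrap' (f : V → E) (hsm : ContDiff ℝ (((⊤:ℕ∞)) : WithTop ℕ∞) f)
    (hbd : ∀ n : ℕ, ∃ B, ∀ x, ‖iteratedFDeriv ℝ n f x‖ ≤ B)
    (hdec : ∀ N : ℕ, ∃ C, ∀ x, (1 + ‖x‖) ^ N * ‖f x‖ ≤ C) :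
    ∀ n N : ℕ, ∃ C, ∀ x, (1 + ‖x‖) ^ N * ‖iteratedFDeriv ℝ n f x‖ ≤ C := by
  intro n
  induction n with
  | zero =>
    intro N
    obtain ⟨C, hC⟩ := hdec N
    exact ⟨C, fun x => by simpa [norm_iteratedFDeriv_zero] using hC x⟩
  | succ n ih =>
    intro N
    obtain ⟨B, hB⟩ := hbd (n + 2)
    have hB0 : 0 ≤ B := le_trans (norm_nonneg _) (hB 0)
    obtain ⟨C, hC⟩ := ih (2 * N)
    have hC0 : 0 ≤ C := le_trans (by positivity) (hC 0)
    refine ⟨2 * (C * 4 ^ N) + B, fun x => ?_⟩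
    set F : V → (V [×n]→L[ℝ] E) := iteratedFDeriv ℝ n f with hF
    have hFdiff : Differentiable ℝ F := hsm.differentiable_iteratedFDeriv (by
      exact_mod_cast lt_of_lt_of_le (WithTop.coe_lt_top _) le_rfl)
    have hGdiff : Differentiable ℝ (iteratedFDeriv ℝ (n + 1) f) :=
      hsm.differentiable_iteratedFDeriv (by
        exact_mod_cast lt_of_lt_of_le (WithTop.coe_lt_top _) le_rfl)
    have hlip : ∀ y z : V, ‖fderiv ℝ F y - fderiv ℝ F z‖ ≤ B * ‖y - z‖ := by
      intro y z
      have h1 : fderiv ℝ F =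
          (continuousMultilinearCurryLeftEquiv ℝ (fun _ : Fin (n + 1) => V) E) ∘
            iteratedFDeriv ℝ (n + 1) f := fderiv_iteratedFDeriv
      have h2 : ‖fderiv ℝ F y - fderiv ℝ F z‖ =
          ‖iteratedFDeriv ℝ (n + 1) f y - iteratedFDeriv ℝ (n + 1) f z‖ := by
        rw [h1]
        simp only [Function.comp_apply]
        rw [← LinearIsometryEquiv.map_sub, LinearIsometryEquiv.norm_map]
      rw [h2]
      refine Convex.norm_image_sub_le_of_norm_fderiv_le (fun u _ => hGdiff u)
        (fun u _ => ?_) convex_univ (Set.mem_univ z) (Set.mem_univ y)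
      rw [norm_fderiv_iteratedFDeriv]
      exact hB u
    set R : ℝ := 1 + ‖x‖ with hRdef
    have hR1 : (1:ℝ) ≤ R := by simp [hRdef, norm_nonneg]
    have hR0 : (0:ℝ) < R := lt_of_lt_of_le one_pos hR1
    have hRN : (0:ℝ) < R ^ N := by positivity
    have hRN1 : (1:ℝ) ≤ R ^ N := one_le_pow₀ hR1
    set t : ℝ := (R ^ N)⁻¹ with htdef
    have ht : 0 < t := by positivity
    have ht1 : t ≤ 1 := by
      rw [htdef]
      exact inv_le_one_of_one_le₀ hRN1
    set A : ℝ := C * 4 ^ N / (R ^ N * R ^ N) with hAdef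
    have hA : ∀ y, ‖y - x‖ ≤ t → ‖F y‖ ≤ A := by
      intro y hy
      have h2 : R ≤ 2 * (1 + ‖y‖) := by
        have h3 : ‖x‖ - ‖y‖ ≤ ‖x - y‖ := norm_sub_norm_le _ _
        have h4 : ‖x - y‖ ≤ 1 := by
          rw [norm_sub_rev]; exact hy.trans ht1
        simp only [hRdef]
        linarith [norm_nonneg y]
      have h5 : R ^ (2 * N) ≤ 4 ^ N * (1 + ‖y‖) ^ (2 * N) := by
        calc R ^ (2 * N) ≤ (2 * (1 + ‖y‖)) ^ (2 * N) :=
              pow_le_pow_left₀ (le_of_lt hR0) h2 _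
          _ = 2 ^ (2 * N) * (1 + ‖y‖) ^ (2 * N) := mul_pow _ _ _
          _ = 4 ^ N * (1 + ‖y‖) ^ (2 * N) := by
              rw [pow_mul]; norm_num
      have h6 : ‖F y‖ * R ^ (2 * N) ≤ C * 4 ^ N := by
        calc ‖F y‖ * R ^ (2 * N) ≤ ‖F y‖ * (4 ^ N * (1 + ‖y‖) ^ (2 * N)) :=
              mul_le_mul_of_nonneg_left h5 (norm_nonneg _)
          _ = 4 ^ N * ((1 + ‖y‖) ^ (2 * N) * ‖F y‖) := by ring
          _ ≤ 4 ^ N * C := by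
              have := hC y
              have h40 : (0:ℝ) ≤ 4 ^ N := by positivity
              exact mul_le_mul_of_nonneg_left this h40
          _ = C * 4 ^ N := mul_comm _ _
      rw [hAdef, le_div_iff₀ (by positivity)]
      calc ‖F y‖ * (R ^ N * R ^ N) = ‖F y‖ * R ^ (2 * N) := by
            rw [two_mul, pow_add]
        _ ≤ C * 4 ^ N := h6
    have hland := landau_bound' F hFdiff hB0 hlip ht hA
    have hnorm : ‖iteratedFDeriv ℝ (n + 1) f x‖ = ‖fderiv ℝ F x‖ :=
      (norm_fderiv_iteratedFDeriv).symm
    rw [hnorm]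
    calc R ^ N * ‖fderiv ℝ F x‖ ≤ R ^ N * (2 * A / t + B * t) :=
          mul_le_mul_of_nonneg_left hland (by positivity)
      _ = 2 * (C * 4 ^ N) + B := by
          rw [htdef, hAdef]
          field_simp

lemma decay_of_gamma' (φ : V → ℂ) (η : V → ℝ) (A B : ℝ) (hA : 0 < A)
    (hγ : ∀ x, A * Real.log (1 + ‖x‖) ≤ η x + Real.log B)
    (hmem : ∀ lam : ℝ, 0 < lam → ∃ M : ℝ, ∀ x, ‖φ x‖ * Real.exp (lam * η x) ≤ M) :
    ∀ N : ℕ, ∃ C, ∀ x, (1 + ‖x‖) ^ N * ‖φ x‖ ≤ C := by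
  intro N
  set lam : ℝ := (N + 1) / A with hlam
  have hlampos : 0 < lam := by positivity
  obtain ⟨M, hM⟩ := hmem lam hlampos
  refine ⟨M * Real.exp (lam * Real.log B), fun x => ?_⟩
  have hRpos : (0:ℝ) < 1 + ‖x‖ := by positivity
  have hR1 : (1:ℝ) ≤ 1 + ‖x‖ := by simp [norm_nonneg]
  have key : (1 + ‖x‖) ^ (N + 1) ≤ Real.exp (lam * η x) * Real.exp (lam * Real.log B) := by
    have h1 : ((N:ℝ) + 1) * Real.log (1 + ‖x‖) = lam * (A * Real.log (1 + ‖x‖)) := by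
      rw [hlam]; field_simp
    have h2 : lam * (A * Real.log (1 + ‖x‖)) ≤ lam * (η x + Real.log B) :=
      mul_le_mul_of_nonneg_left (hγ x) hlampos.le
    calc (1 + ‖x‖) ^ (N + 1) = Real.exp (((N:ℝ) + 1) * Real.log (1 + ‖x‖)) := by
          rw [show ((N:ℝ) + 1) = ((N + 1 : ℕ) : ℝ) by push_cast; ring,
            Real.exp_nat_mul, Real.exp_log hRpos]
      _ ≤ Real.exp (lam * (η x + Real.log B)) := by
          rw [h1]; exact Real.exp_le_exp.mpr h2
      _ = Real.exp (lam * η x) * Real.exp (lam * Real.log B) := by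
          rw [← Real.exp_add]; ring_nf
  calc (1 + ‖x‖) ^ N * ‖φ x‖ ≤ (1 + ‖x‖) ^ (N + 1) * ‖φ x‖ := by
        apply mul_le_mul_of_nonneg_right _ (norm_nonneg _)
        exact pow_le_pow_right₀ hR1 (Nat.le_succ N)
    _ ≤ (Real.exp (lam * η x) * Real.exp (lam * Real.log B)) * ‖φ x‖ :=
        mul_le_mul_of_nonneg_right key (norm_nonneg _)
    _ = (‖φ x‖ * Real.exp (lam * η x)) * Real.exp (lam * Real.log B) := by ring
    _ ≤ M * Real.exp (lam * Real.log B) :=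
        mul_le_mul_of_nonneg_right (hM x) (Real.exp_nonneg _)

lemma moment_integrable' {d : ℕ} (f : EuclideanSpace ℝ (Fin d) → ℂ) (hf : Continuous f)
    (hdec : ∀ N : ℕ, ∃ C, ∀ x, (1 + ‖x‖) ^ N * ‖f x‖ ≤ C) (k : ℕ) :
    Integrable (fun v : EuclideanSpace ℝ (Fin d) => ‖v‖ ^ k * ‖f v‖) := by
  obtain ⟨C, hC⟩ := hdec (k + (d + 1))
  have hC0 : 0 ≤ C := le_trans (by positivity) (hC 0)
  have hint : Integrable (fun v : EuclideanSpace ℝ (Fin d) =>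
      C * (1 + ‖v‖) ^ (-(d + 1 : ℝ))) := by
    refine (integrable_one_add_norm ?_).const_mul C
    rw [finrank_euclideanSpace_fin]
    push_cast; linarith
  refine hint.mono ?_ ?_
  · exact ((continuous_norm.pow k).mul (hf.norm)).aestronglyMeasurable
  · filter_upwards with v
    have hRpos : (0:ℝ) < 1 + ‖v‖ := by positivity
    have h0 : ‖v‖ ^ k * ‖f v‖ * (1 + ‖v‖) ^ (d + 1 : ℕ) ≤ C := by
      calc ‖v‖ ^ k * ‖f v‖ * (1 + ‖v‖) ^ (d + 1 : ℕ)
            ≤ (1 + ‖v‖) ^ k * ‖f v‖ * (1 + ‖v‖) ^ (d + 1 : ℕ) := by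
              have : ‖v‖ ^ k ≤ (1 + ‖v‖) ^ k :=
                pow_le_pow_left₀ (norm_nonneg v) (by linarith [norm_nonneg v]) k
              exact mul_le_mul_of_nonneg_right
                (mul_le_mul_of_nonneg_right this (norm_nonneg _)) (by positivity)
          _ = (1 + ‖v‖) ^ (k + (d + 1)) * ‖f v‖ := by rw [pow_add]; ring
          _ ≤ C := hC v
    have h1 : ‖v‖ ^ k * ‖f v‖ ≤ C / (1 + ‖v‖) ^ (d + 1 : ℕ) :=
      (le_div_iff₀ (by positivity)).mpr h0
    have h2 : C * (1 + ‖v‖) ^ (-(d + 1 : ℝ)) = C / (1 + ‖v‖) ^ (d + 1 : ℕ) := by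
      rw [show (-(d + 1 : ℝ)) = -((d + 1 : ℕ) : ℝ) by push_cast; ring,
        Real.rpow_neg hRpos.le, Real.rpow_natCast, div_eq_mul_inv]
    rw [Real.norm_eq_abs, abs_of_nonneg (by positivity),
      Real.norm_eq_abs, abs_of_nonneg (by positivity), h2]
    exact h1

lemma integrable_of_decay' {d : ℕ} (f : EuclideanSpace ℝ (Fin d) → ℂ) (hf : Continuous f)
    (hdec : ∀ N : ℕ, ∃ C, ∀ x, (1 + ‖x‖) ^ N * ‖f x‖ ≤ C) : Integrable f := by
  have h0 := moment_integrable' f hf hdec 0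
  simp only [pow_zero, one_mul] at h0
  exact (integrable_norm_iff hf.aestronglyMeasurable).mp h0

/-- A smooth compactly supported real function, as a complex-valued Schwartz map. -/
noncomputable def myOfCompactSupport (g : V → ℝ) (hg : ContDiff ℝ (((⊤:ℕ∞)) : WithTop ℕ∞) g)
    (hsupp : HasCompactSupport g) : SchwartzMap V ℂ where
  toFun x := (g x : ℂ)
  smooth' := Complex.ofRealCLM.contDiff.comp hg
  decay' := by
    intro k n
    have hc : HasCompactSupport (fun x : V => (g x : ℂ)) :=
      hsupp.comp_left (g := Complex.ofReal) Complex.ofReal_zero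
    have hD : HasCompactSupport (iteratedFDeriv ℝ n (fun x : V => (g x : ℂ))) :=
      hc.iteratedFDeriv n
    have hsm : ContDiff ℝ (((⊤:ℕ∞)) : WithTop ℕ∞) (fun x : V => (g x : ℂ)) := Complex.ofRealCLM.contDiff.comp hg
    have hcont : Continuous (fun x : V => ‖x‖ ^ k * ‖iteratedFDeriv ℝ n
        (fun x : V => (g x : ℂ)) x‖) :=
      (continuous_norm.pow k).mul (hsm.continuous_iteratedFDeriv (by exact_mod_cast le_top)).norm
    have hDsupp : HasCompactSupport (fun x : V => ‖x‖ ^ k * ‖iteratedFDeriv ℝ n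
        (fun x : V => (g x : ℂ)) x‖) := by
      have h1 : HasCompactSupport (fun x : V => ‖iteratedFDeriv ℝ n
          (fun x : V => (g x : ℂ)) x‖) := hD.norm
      exact h1.mul_left
    obtain ⟨C, hC⟩ := hDsupp.exists_bound_of_continuous hcont
    exact ⟨C, fun x => le_trans (le_abs_self _) (by rw [← Real.norm_eq_abs]; exact hC x)⟩

end Helpers

/-- Membership of a pair `(φ, φ̂)` in the Banach space `S^λ_{η,ω}`. -/
def BBMem (d : ℕ) (η ω : EuclideanSpace ℝ (Fin d) → ℝ) (lam : ℝ)
    (φ φhat : EuclideanSpace ℝ (Fin d) → ℂ) : Prop :=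
  (∃ M : ℝ, ∀ x, ‖φ x‖ * Real.exp (lam * η x) ≤ M) ∧
  (∃ M : ℝ, ∀ ξ, ‖φhat ξ‖ * Real.exp (lam * ω ξ) ≤ M)

/-- `φhat` is the Fourier transform of `φ` in the sense of tempered distributions. -/
def FTpair (d : ℕ) (φ φhat : EuclideanSpace ℝ (Fin d) → ℂ) : Prop :=
  ∀ g : SchwartzMap (EuclideanSpace ℝ (Fin d)) ℂ,
    ∫ x, φhat x * g x = ∫ x, φ x * (SchwartzMap.fourierTransformCLM ℂ g) x

/-- if ω, η satisfy (α) and (γ) and the Beurling–Björck space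
`S^{(ω)}_{(η)}(ℝ^d)` is nontrivial, then every element of `S^{(ω)}_{(η)}(ℝ^d)` is a Schwartz
function. -/
theorem beurling_bjorck_subset_schwartz (d : ℕ)
    (η ω : EuclideanSpace ℝ (Fin d) → ℝ)
    (hηnn : ∀ x, 0 ≤ η x) (hηmeas : Measurable η)
    (hηloc : ∀ r : ℝ, ∃ M : ℝ, ∀ x, ‖x‖ ≤ r → η x ≤ M)
    (hωnn : ∀ x, 0 ≤ ω x) (hωmeas : Measurable ω)
    (hωloc : ∀ r : ℝ, ∃ M : ℝ, ∀ x, ‖x‖ ≤ r → ω x ≤ M)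
    (Lη Cη Lω Cω : ℝ) (hLη : 0 < Lη) (hCη : 0 < Cη) (hLω : 0 < Lω) (hCω : 0 < Cω)
    (halphaη : ∀ x y, η (x + y) ≤ Lη * (η x + η y) + Real.log Cη)
    (halphaω : ∀ x y, ω (x + y) ≤ Lω * (ω x + ω y) + Real.log Cω)
    (Aη Bη Aω Bω : ℝ) (hAη : 0 < Aη) (hBη : 0 < Bη) (hAω : 0 < Aω) (hBω : 0 < Bω)
    (hgammaη : ∀ x, Aη * Real.log (1 + ‖x‖) ≤ η x + Real.log Bη)
    (hgammaω : ∀ x, Aω * Real.log (1 + ‖x‖) ≤ ω x + Real.log Bω)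
    -- nontriviality of the space
    (hnontriv : ∃ φ₀ φ₀hat : EuclideanSpace ℝ (Fin d) → ℂ,
      Measurable φ₀ ∧ Measurable φ₀hat ∧ FTpair d φ₀ φ₀hat ∧
      (∀ lam : ℝ, 0 < lam → BBMem d η ω lam φ₀ φ₀hat) ∧
      ¬ (∀ᵐ x ∂(volume : Measure (EuclideanSpace ℝ (Fin d))), φ₀ x = 0))
    -- an arbitrary element of the space, given by continuous representatives
    (φ φhat : EuclideanSpace ℝ (Fin d) → ℂ)
    (hφcont : Continuous φ) (hφhatcont : Continuous φhat)
    (hFT : FTpair d φ φhat)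
    (hφmem : ∀ lam : ℝ, 0 < lam → BBMem d η ω lam φ φhat) :
    ∃ ψ : SchwartzMap (EuclideanSpace ℝ (Fin d)) ℂ, ∀ x, φ x = ψ x := by
  -- rapid decay of φ and φhat
  have hdecφ : ∀ N : ℕ, ∃ C, ∀ x : (EuclideanSpace ℝ (Fin d)), (1 + ‖x‖) ^ N * ‖φ x‖ ≤ C :=
    decay_of_gamma' φ η Aη Bη hAη hgammaη (fun lam hl => (hφmem lam hl).1)
  have hdecφh : ∀ N : ℕ, ∃ C, ∀ x : (EuclideanSpace ℝ (Fin d)), (1 + ‖x‖) ^ N * ‖φhat x‖ ≤ C :=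
    decay_of_gamma' φhat ω Aω Bω hAω hgammaω (fun lam hl => (hφmem lam hl).2)
  have hmomφh : ∀ k : ℕ, Integrable (fun v : (EuclideanSpace ℝ (Fin d)) => ‖v‖ ^ k * ‖φhat v‖) :=
    moment_integrable' φhat hφhatcont hdecφh
  have hφint : Integrable φ := integrable_of_decay' φ hφcont hdecφ
  have hφhint : Integrable φhat := integrable_of_decay' φhat hφhatcont hdecφh
  -- boundedness
  have hbddφh : ∃ C, ∀ x : (EuclideanSpace ℝ (Fin d)), ‖φhat x‖ ≤ C := by
    obtain ⟨C, hC⟩ := hdecφh 0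
    exact ⟨C, fun x => by simpa using hC x⟩
  have h𝓕cont : Continuous (𝓕 φ) :=
    VectorFourier.fourierIntegral_continuous Real.continuous_fourierChar
      (by exact continuous_inner) hφint
  have hbdd𝓕 : ∃ C, ∀ x : (EuclideanSpace ℝ (Fin d)), ‖𝓕 φ x‖ ≤ C :=
    ⟨∫ v, ‖φ v‖, fun w => VectorFourier.norm_fourierIntegral_le_integral_norm _ _ _ _ _⟩
  -- multiplication formula
  have hflip : ∀ g : SchwartzMap (EuclideanSpace ℝ (Fin d)) ℂ, ∫ x, 𝓕 φ x * g x = ∫ x, φ x * 𝓕 (⇑g) x := by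
    intro g
    have h := VectorFourier.integral_fourierIntegral_smul_eq_flip (L := innerₗ (EuclideanSpace ℝ (Fin d))) (μ := (volume : Measure (EuclideanSpace ℝ (Fin d)))) (ν := (volume : Measure (EuclideanSpace ℝ (Fin d))))
      Real.continuous_fourierChar continuous_inner hφint g.integrable
    rw [flip_innerₗ] at h
    simp only [smul_eq_mul] at h; exact h
  -- φhat is the Fourier transform of φ
  have hkey : ∀ (g : (EuclideanSpace ℝ (Fin d)) → ℝ), ContDiff ℝ (((⊤:ℕ∞)) : WithTop ℕ∞) g → HasCompactSupport g →
      ∫ x, g x • (φhat x - 𝓕 φ x) = 0 := by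
    intro g hg hgs
    set gC : SchwartzMap (EuclideanSpace ℝ (Fin d)) ℂ := myOfCompactSupport g hg hgs with hgCdef
    have hgCapp : ∀ x, gC x = (g x : ℂ) := fun x => rfl
    have h1 : ∫ x, φhat x * gC x = ∫ x, 𝓕 φ x * gC x := by
      rw [hFT gC, hflip gC]
      simp [SchwartzMap.fourierTransformCLM_apply, SchwartzMap.fourier_coe]
    have hgCcont : Continuous (fun x : (EuclideanSpace ℝ (Fin d)) => (g x : ℂ)) :=
      Complex.continuous_ofReal.comp hg.continuous
    have hgCint : Integrable (fun x : (EuclideanSpace ℝ (Fin d)) => (g x : ℂ)) :=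
      hgCcont.integrable_of_hasCompactSupport
        (hgs.comp_left (g := Complex.ofReal) Complex.ofReal_zero)
    have hb1 : Integrable (fun x : (EuclideanSpace ℝ (Fin d)) => φhat x * (g x : ℂ)) :=
      hgCint.bdd_mul hφhatcont.aestronglyMeasurable (ae_of_all _ hbddφh.choose_spec)
    have hb2 : Integrable (fun x : (EuclideanSpace ℝ (Fin d)) => 𝓕 φ x * (g x : ℂ)) :=
      hgCint.bdd_mul h𝓕cont.aestronglyMeasurable (ae_of_all _ hbdd𝓕.choose_spec)
    have e : ∀ x : (EuclideanSpace ℝ (Fin d)), g x • (φhat x - 𝓕 φ x) = φhat x * (g x : ℂ) - 𝓕 φ x * (g x : ℂ) := by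
      intro x
      rw [Complex.real_smul]
      ring
    calc ∫ x, g x • (φhat x - 𝓕 φ x)
        = ∫ x, (φhat x * (g x : ℂ) - 𝓕 φ x * (g x : ℂ)) := integral_congr_ae (ae_of_all _ e)
      _ = (∫ x, φhat x * (g x : ℂ)) - ∫ x, 𝓕 φ x * (g x : ℂ) := integral_sub hb1 hb2
      _ = 0 := sub_eq_zero.mpr h1
  have hae : ∀ᵐ x : (EuclideanSpace ℝ (Fin d)) ∂volume, φhat x - 𝓕 φ x = 0 :=
    ae_eq_zero_of_integral_contDiff_smul_eq_zero
      ((hφhatcont.sub h𝓕cont).locallyIntegrable) hkey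
  have hFTeq : φhat = 𝓕 φ := by
    have h2 : (fun x : (EuclideanSpace ℝ (Fin d)) => φhat x - 𝓕 φ x) = fun _ => (0:ℂ) :=
      (Continuous.ae_eq_iff_eq (μ := (volume : Measure (EuclideanSpace ℝ (Fin d)))) (hφhatcont.sub h𝓕cont)
        continuous_const).mp hae
    funext x
    have := congrFun h2 x
    simpa [sub_eq_zero] using this
  -- Fourier inversion
  have hinv : 𝓕⁻ (𝓕 φ) = φ :=
    hφcont.fourierInv_fourier_eq hφint (by rw [← hFTeq]; exact hφhint)
  have hcomp : ∀ x : (EuclideanSpace ℝ (Fin d)), φ x = 𝓕 φhat (-x) := by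
    intro x
    conv_lhs => rw [← hinv]
    rw [Real.fourierInv_eq_fourier_neg, ← hFTeq]
  -- smoothness
  have hmom' : ∀ n : ℕ, (n : ℕ∞) ≤ (⊤ : ℕ∞) →
      Integrable (fun v : (EuclideanSpace ℝ (Fin d)) => ‖v‖ ^ n * ‖φhat v‖) := fun n _ => hmomφh n
  have hsm𝓕 : ContDiff ℝ ((⊤ : ℕ∞) : WithTop ℕ∞) (𝓕 φhat) :=
    Real.contDiff_fourier (N := (⊤ : ℕ∞)) hmom'
  have hcompfun : φ = (𝓕 φhat) ∘ (fun x : (EuclideanSpace ℝ (Fin d)) => -x) := funext fun x => hcomp x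
  have hsm : ContDiff ℝ (((⊤:ℕ∞)) : WithTop ℕ∞) φ := by
    rw [hcompfun]
    exact hsm𝓕.comp contDiff_neg
  -- global bounds on all derivatives
  have hbound : ∀ n : ℕ, ∃ B, ∀ x : (EuclideanSpace ℝ (Fin d)), ‖iteratedFDeriv ℝ n φ x‖ ≤ B := by
    intro n
    have h'int : ∀ k m : ℕ, (k : ℕ∞) ≤ (⊤ : ℕ∞) → (m : ℕ∞) ≤ (0 : ℕ∞) →
        Integrable (fun v : (EuclideanSpace ℝ (Fin d)) => ‖v‖ ^ k * ‖iteratedFDeriv ℝ m φhat v‖) := by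
      intro k m _ hm
      obtain rfl : m = 0 := by exact_mod_cast le_antisymm hm zero_le
      simpa [norm_iteratedFDeriv_zero] using hmomφh k
    refine ⟨(2 * π) ^ n * (2 * (n:ℝ) + 2) ^ (0:ℕ) *
      ∑ p ∈ Finset.range (n + 1) ×ˢ Finset.range (0 + 1),
        ∫ v : (EuclideanSpace ℝ (Fin d)), ‖v‖ ^ p.1 * ‖iteratedFDeriv ℝ p.2 φhat v‖, fun x => ?_⟩
    have hnormeq : ‖iteratedFDeriv ℝ n φ x‖ = ‖iteratedFDeriv ℝ n (𝓕 φhat) (-x)‖ := by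
      have h3 : φ = (𝓕 φhat) ∘ ⇑(LinearIsometryEquiv.neg ℝ (E := (EuclideanSpace ℝ (Fin d)))) := by
        rw [hcompfun]; rfl
      rw [h3, LinearIsometryEquiv.norm_iteratedFDeriv_comp_right]
      rfl
    rw [hnormeq]
    have H := Real.pow_mul_norm_iteratedFDeriv_fourier_le (f := φhat)
      (K := (⊤ : ℕ∞)) (N := (0 : ℕ∞)) (contDiff_zero.2 hφhatcont) h'int
      (k := n) (n := 0) le_top le_rfl (-x)
    simpa using H
  -- rapid decay of all derivatives
  have hdecall := decay_bootstrap' φ hsm hbound hdecφ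
  refine ⟨⟨φ, hsm, fun k n => ?_⟩, fun x => rfl⟩
  obtain ⟨C, hC⟩ := hdecall n k
  refine ⟨C, fun x => ?_⟩
  calc ‖x‖ ^ k * ‖iteratedFDeriv ℝ n φ x‖
      ≤ (1 + ‖x‖) ^ k * ‖iteratedFDeriv ℝ n φ x‖ :=
        mul_le_mul_of_nonneg_right
          (pow_le_pow_left₀ (norm_nonneg x) (by linarith [norm_nonneg x]) k) (norm_nonneg _)
    _ ≤ C := hC x
end
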